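/- arXiv:2408.00313 — 6 statements merged into one kernel-verified Lean document; each statement's English description precedes it below -/
import Mathlib

section
/- Let f : U ⊆ R^2 → R^3 be a frontal with unit normal n and p a non-degenerate singular point of f. Let γ = γ(t) be a singular curve with γ(0) = p, and let ξ, η be smooth vector fields near p such that ξ = γ' and df(η) = 0 along γ, and det(ξ, η) > 0 along γ. Assume: η^3 f(p) = 0; the vectors ξf(p) and η^2 f(p) are linearly independent; and the vectors ξη^3 f(p) and η^2 f(p) are linearly dependent. Then there exist ε > 0, a regular curve c : (-ε, ε) → U with c(0) = p and c'(0) parallel to η(p), and a real number ℓ such that, writing ĉ = f ∘ c, one has ĉ''(0) ≠ 0, ĉ'''(0) = ℓ ĉ''(0), and det(df(γ'(0)), ĉ''(0), 3 ĉ^{(5)}(0) - 10 ℓ ĉ^{(4)}(0)) = 3 det(ξf, η^2 f, η^5 f)(p). -/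
noncomputable section

open Real Filter

abbrev R2 : Type := ℝ × ℝ
abbrev R3 : Type := ℝ × ℝ × ℝ

/-- The partial derivative in the `u`-direction. -/
def pu (f : R2 → R3) (p : R2) : R3 := fderiv ℝ f p (1, 0)
/-- The partial derivative in the `v`-direction. -/
def pv (f : R2 → R3) (p : R2) : R3 := fderiv ℝ f p (0, 1)

/-- Determinant of three column vectors in ℝ³. -/
def det3 (a b c : R3) : ℝ :=
  a.1 * (b.2.1 * c.2.2 - b.2.2 * c.2.1)
  - b.1 * (a.2.1 * c.2.2 - a.2.2 * c.2.1)
  + c.1 * (a.2.1 * b.2.2 - a.2.2 * b.2.1)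

/-- Determinant of two vectors in ℝ². -/
def det2 (a b : R2) : ℝ := a.1 * b.2 - a.2 * b.1

/-- Euclidean inner product on ℝ³. -/
def ip3 (a b : R3) : ℝ := a.1 * b.1 + a.2.1 * b.2.1 + a.2.2 * b.2.2

/-- `f : ℝ² → ℝ³ = 𝕃³` is the generalized timelike minimal surface with real Weierstrass
data `(g1, g2, w1 du, w2 dv)`: it is smooth, its partial derivatives are
`f_u = (ω1/2)·(-1-g1², 1-g1², 2g1)` and `f_v = (ω2/2)·(1+g2², 1-g2², -2g2)`
(which encodes the Weierstrass-type integral representation), and it is an immersion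
on an open dense set. -/
structure IsGTMS (f : R2 → R3) (g1 g2 w1 w2 : ℝ → ℝ) : Prop where
  smooth_f : ContDiff ℝ (⊤ : ℕ∞) f
  smooth_g1 : ContDiff ℝ (⊤ : ℕ∞) g1
  smooth_g2 : ContDiff ℝ (⊤ : ℕ∞) g2
  smooth_w1 : ContDiff ℝ (⊤ : ℕ∞) w1
  smooth_w2 : ContDiff ℝ (⊤ : ℕ∞) w2
  deriv_u : ∀ p : R2, pu f p =
    ((-1 - g1 p.1 ^ 2) * w1 p.1 / 2, (1 - g1 p.1 ^ 2) * w1 p.1 / 2, g1 p.1 * w1 p.1)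
  deriv_v : ∀ p : R2, pv f p =
    ((1 + g2 p.2 ^ 2) * w2 p.2 / 2, (1 - g2 p.2 ^ 2) * w2 p.2 / 2, -(g2 p.2 * w2 p.2))
  dense_immersion : Dense {p : R2 | Function.Injective (fderiv ℝ f p)}

/-- `Φ` is a germ of diffeomorphism at `p`. -/
def IsLocalDiffeoAt {E F : Type*} [NormedAddCommGroup E] [NormedSpace ℝ E]
    [NormedAddCommGroup F] [NormedSpace ℝ F] (Φ : E → F) (p : E) : Prop :=
  ∃ (U : Set E) (V : Set F) (Φinv : F → E),
    IsOpen U ∧ p ∈ U ∧ IsOpen V ∧ Φ p ∈ V ∧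
    ContDiffOn ℝ (⊤ : ℕ∞) Φ U ∧ ContDiffOn ℝ (⊤ : ℕ∞) Φinv V ∧
    Set.MapsTo Φ U V ∧ Set.MapsTo Φinv V U ∧
    (∀ x ∈ U, Φinv (Φ x) = x) ∧ (∀ y ∈ V, Φ (Φinv y) = y)

/-- 𝒜-equivalence of the germ of `f1` at `p1` and the germ of `f2` at `p2`. -/
def AEquiv (f1 : R2 → R3) (p1 : R2) (f2 : R2 → R3) (p2 : R2) : Prop :=
  ∃ (Φ : R2 → R2) (Ψ : R3 → R3),
    IsLocalDiffeoAt Φ p1 ∧ Φ p1 = p2 ∧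
    IsLocalDiffeoAt Ψ (f1 p1) ∧ Ψ (f1 p1) = f2 p2 ∧
    ∀ᶠ x in nhds p1, Ψ (f1 x) = f2 (Φ x)

/-- The canonical unit normal of a generalized timelike minimal surface. -/
def gtmsNormal (g1 g2 : ℝ → ℝ) (p : R2) : R3 :=
  (Real.sqrt ((1 - g1 p.1 * g2 p.2) ^ 2 + 2 * (g1 p.1 + g2 p.2) ^ 2))⁻¹ •
    (g1 p.1 + g2 p.2, -g1 p.1 + g2 p.2, 1 + g1 p.1 * g2 p.2)

/-- The signed area density function `λ = det(f_u, f_v, n)`. -/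
def areaDensity (f : R2 → R3) (g1 g2 : ℝ → ℝ) (p : R2) : ℝ :=
  det3 (pu f p) (pv f p) (gtmsNormal g1 g2 p)

/-- `f` is a front at `p`: the Legendrian lift `(f, n)` is an immersion at `p`,
where `n` is the canonical unit normal. -/
def IsFrontAt (f : R2 → R3) (g1 g2 : ℝ → ℝ) (p : R2) : Prop :=
  Function.Injective (fderiv ℝ (fun q => (f q, gtmsNormal g1 g2 q)) p)

/-- The differential of `f` at `p` has rank one. -/
def RankOne (f : R2 → R3) (p : R2) : Prop :=
  LinearMap.rank (fderiv ℝ f p).toLinearMap = 1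

/-- Directional derivative of `F` along the vector field `X`. -/
def vD (X : R2 → R2) (F : R2 → R3) : R2 → R3 := fun q => fderiv ℝ F q (X q)

/-- `φ_i = g_i' / (g_i² ω_i)`. -/
def phiW (g w : ℝ → ℝ) : ℝ → ℝ := fun t => deriv g t / (g t ^ 2 * w t)
/-- `Φ_i = (g_i/g_i') φ_i'`. -/
def PhiW (g w : ℝ → ℝ) : ℝ → ℝ := fun t => g t / deriv g t * deriv (phiW g w) t

/-- standard cuspidal butterfly -/
def fCBF : R2 → R3 := fun q =>
  (q.1, 5 * q.2 ^ 4 + 2 * q.1 * q.2, 4 * q.2 ^ 5 + q.1 * q.2 ^ 2 - q.1 ^ 2)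
/-- standard cuspidal S₁⁺ singularity -/
def fCS1p : R2 → R3 := fun q => (q.1, q.2 ^ 2, q.2 ^ 3 * (q.1 ^ 2 + q.2 ^ 2))
/-- standard cuspidal S₁⁻ singularity -/
def fCS1m : R2 → R3 := fun q => (q.1, q.2 ^ 2, q.2 ^ 3 * (q.1 ^ 2 - q.2 ^ 2))
/-- standard cuspidal edge -/
def fCE : R2 → R3 := fun q => (q.1, q.2 ^ 2, q.2 ^ 3)
/-- standard (2,5)-cuspidal edge -/
def fCE25 : R2 → R3 := fun q => (q.1, q.2 ^ 2, q.2 ^ 5)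
/-- standard cuspidal beaks -/
def fCBK : R2 → R3 := fun q =>
  (q.2, q.1 ^ 3 - q.1 * q.2 ^ 2, 3 * q.1 ^ 4 - 2 * q.1 ^ 2 * q.2 ^ 2)
/-- standard cuspidal lips -/
def fCLP : R2 → R3 := fun q =>
  (q.2, q.1 ^ 3 + q.1 * q.2 ^ 2, 3 * q.1 ^ 4 + 2 * q.1 ^ 2 * q.2 ^ 2)
/-- standard D₄⁺ singularity -/
def fD4p : R2 → R3 := fun q =>
  (q.1 * q.2, q.1 ^ 2 + 3 * q.2 ^ 2, q.1 ^ 2 * q.2 + q.2 ^ 3)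
/-- standard D₄⁻ singularity -/
def fD4m : R2 → R3 := fun q =>
  (q.1 * q.2, q.1 ^ 2 - 3 * q.2 ^ 2, q.1 ^ 2 * q.2 - q.2 ^ 3)

section MyAux
open ContDiff Filter Set


variable {E F G : Type} [NormedAddCommGroup E] [NormedSpace ℝ E]
  [NormedAddCommGroup F] [NormedSpace ℝ F] [NormedAddCommGroup G] [NormedSpace ℝ G]

lemma my_iteratedDeriv_prod (n : ℕ) :
    ∀ (a : ℝ → E) (b : ℝ → F), ContDiff ℝ ∞ a → ContDiff ℝ ∞ b → ∀ x,
      iteratedDeriv n (fun t => (a t, b t)) x = (iteratedDeriv n a x, iteratedDeriv n b x) := by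
  induction n with
  | zero => intro a b _ _ x; simp [iteratedDeriv_zero]
  | succ n ih =>
    intro a b ha hb x
    have hd : deriv (fun t => (a t, b t)) = fun t => (deriv a t, deriv b t) := by
      funext t
      exact (((ha.differentiable (by simp)).differentiableAt.hasDerivAt).prodMk
        ((hb.differentiable (by simp)).differentiableAt.hasDerivAt)).deriv
    rw [iteratedDeriv_succ', hd, ih _ _ (contDiff_infty_iff_deriv.mp ha).2
      (contDiff_infty_iff_deriv.mp hb).2, ← iteratedDeriv_succ', ← iteratedDeriv_succ']

lemma my_jet_comp (N : ℕ) :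
    ∀ {E : Type} [NormedAddCommGroup E] [NormedSpace ℝ E]
      (u v : ℝ → E), ContDiff ℝ ∞ u → ContDiff ℝ ∞ v →
      (∀ j ≤ N, iteratedDeriv j u 0 = iteratedDeriv j v 0) →
      ∀ (F : E → G), ContDiff ℝ ∞ F →
      ∀ k ≤ N, iteratedDeriv k (F ∘ u) 0 = iteratedDeriv k (F ∘ v) 0 := by
  induction N with
  | zero =>
    intro E _ _ u v hu hv h F hF k hk
    interval_cases k
    have h0 := h 0 le_rfl
    simp only [iteratedDeriv_zero] at h0
    simp [Function.comp, h0]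
  | succ N ih =>
    intro E _ _ u v hu hv h F hF k hk
    have h1 : (∞ : WithTop ℕ∞) + 1 ≤ ∞ := by norm_cast
    match k with
    | 0 =>
      have := h 0 (by norm_num)
      simp only [iteratedDeriv_zero] at this ⊢
      simp [Function.comp, this]
    | m + 1 =>
      have hm : m ≤ N := by omega
      set Gm : E × E → G := fun z => fderiv ℝ F z.1 z.2 with hGm
      have hGsm : ContDiff ℝ ∞ Gm :=
        ((hF.fderiv_right h1).comp contDiff_fst).clm_apply contDiff_snd
      have hder : ∀ (w : ℝ → E), ContDiff ℝ ∞ w →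
          deriv (F ∘ w) = Gm ∘ (fun t => (w t, deriv w t)) := by
        intro w hw
        funext t
        exact (((hF.differentiable (by simp)).differentiableAt.hasFDerivAt).comp_hasDerivAt t
          ((hw.differentiable (by simp)).differentiableAt.hasDerivAt)).deriv
      have hwu : ContDiff ℝ ∞ (fun t => (u t, deriv u t)) :=
        hu.prodMk (contDiff_infty_iff_deriv.mp hu).2
      have hwv : ContDiff ℝ ∞ (fun t => (v t, deriv v t)) :=
        hv.prodMk (contDiff_infty_iff_deriv.mp hv).2
      have hjets : ∀ j ≤ N, iteratedDeriv j (fun t => (u t, deriv u t)) 0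
          = iteratedDeriv j (fun t => (v t, deriv v t)) 0 := by
        intro j hj
        rw [my_iteratedDeriv_prod j u (deriv u) hu (contDiff_infty_iff_deriv.mp hu).2,
          my_iteratedDeriv_prod j v (deriv v) hv (contDiff_infty_iff_deriv.mp hv).2]
        rw [← iteratedDeriv_succ', ← iteratedDeriv_succ']
        exact Prod.ext (h j (by omega)) (h (j + 1) (by omega))
      rw [iteratedDeriv_succ', iteratedDeriv_succ', hder u hu, hder v hv]
      exact ih _ _ hwu hwv hjets Gm hGsm m hm

/-- Derivative of a truncated Taylor-type polynomial curve. -/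
lemma my_taylorPoly_deriv (m : ℕ) (d : ℕ → E) :
    deriv (fun t : ℝ => ∑ j ∈ Finset.range (m + 1), (t ^ j / (j.factorial : ℝ)) • d j)
      = fun t : ℝ => ∑ j ∈ Finset.range m, (t ^ j / (j.factorial : ℝ)) • d (j + 1) := by
  funext t
  have H : HasDerivAt (fun t : ℝ => ∑ j ∈ Finset.range (m + 1), (t ^ j / (j.factorial : ℝ)) • d j)
      (∑ j ∈ Finset.range m, (t ^ j / (j.factorial : ℝ)) • d (j + 1)) t := by
    have : ∀ j ∈ Finset.range (m + 1), HasDerivAt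
        (fun t : ℝ => (t ^ j / (j.factorial : ℝ)) • d j)
        (if j = 0 then 0 else (t ^ (j - 1) / ((j-1).factorial : ℝ)) • d j) t := by
      intro j _
      match j with
      | 0 =>
        simp only [pow_zero, Nat.factorial_zero, Nat.cast_one, div_one, one_smul, if_pos rfl]
        exact hasDerivAt_const t (d 0)
      | i + 1 =>
        simp only [if_neg (Nat.succ_ne_zero i), Nat.add_sub_cancel]
        have h := ((hasDerivAt_pow (i + 1) t).div_const ((i+1).factorial : ℝ)).smul_const (d (i+1))
        have e : ((i+1 : ℕ) : ℝ) * t ^ (i + 1 - 1) / ((i + 1).factorial : ℝ)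
            = t ^ i / (i.factorial : ℝ) := by
          rw [Nat.add_sub_cancel, Nat.factorial_succ]
          push_cast
          field_simp
        rw [e] at h
        exact h
    have H2 := HasDerivAt.fun_sum this
    convert H2 using 1
    rw [Finset.sum_range_succ' (fun j => if j = 0 then (0 : E)
      else (t ^ (j - 1) / ((j-1).factorial : ℝ)) • d j) m]
    simp
  exact H.deriv

lemma my_taylorPoly_contDiff (m : ℕ) (d : ℕ → E) :
    ContDiff ℝ (⊤ : ℕ∞) (fun t : ℝ => ∑ j ∈ Finset.range (m + 1), (t ^ j / (j.factorial : ℝ)) • d j) := by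
  apply ContDiff.sum
  intro j _
  exact ((contDiff_id.pow j).div_const _).smul contDiff_const

lemma my_taylorPoly_iteratedDeriv (k : ℕ) :
    ∀ (m : ℕ) (d : ℕ → E), k ≤ m →
      iteratedDeriv k (fun t : ℝ => ∑ j ∈ Finset.range (m + 1),
        (t ^ j / (j.factorial : ℝ)) • d j) 0 = d k := by
  induction k with
  | zero =>
    intro m d _
    rw [iteratedDeriv_zero]
    rw [Finset.sum_eq_single 0]
    · simp
    · intro j _ hj
      match j with
      | i + 1 => simp
    · simp
  | succ k ih =>
    intro m d hk
    match m with
    | m' + 1 =>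
      rw [iteratedDeriv_succ', my_taylorPoly_deriv (m' + 1) d]
      exact ih m' (fun j => d (j + 1)) (by omega)

end MyAux

open ContDiff

/-- Lemma on the existence of the curve `c` used in the criterion for
cuspidal S₁ singularities, for a general frontal `f` with unit normal `n`. -/
theorem exists_curve_for_S1_criterion
    (f n : R2 → R3) (p : R2)
    (hf : ContDiff ℝ (⊤ : ℕ∞) f) (hn : ContDiff ℝ (⊤ : ℕ∞) n)
    (hunit : ∀ q, ip3 (n q) (n q) = 1)
    (hperp_u : ∀ q, ip3 (n q) (pu f q) = 0)
    (hperp_v : ∀ q, ip3 (n q) (pv f q) = 0)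
    (hsing : ¬ Function.Injective (fderiv ℝ f p))
    (hnondeg : fderiv ℝ (fun q => det3 (pu f q) (pv f q) (n q)) p ≠ 0)
    (γ : ℝ → R2) (hγ : ContDiff ℝ (⊤ : ℕ∞) γ) (hγ0 : γ 0 = p)
    (hγreg : ∀ t, deriv γ t ≠ 0)
    (hγsing : ∀ t, ¬ Function.Injective (fderiv ℝ f (γ t)))
    (ξ η : R2 → R2) (hξsm : ContDiff ℝ (⊤ : ℕ∞) ξ) (hηsm : ContDiff ℝ (⊤ : ℕ∞) η)
    (hξγ : ∀ t, ξ (γ t) = deriv γ t)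
    (hηγ : ∀ t, fderiv ℝ f (γ t) (η (γ t)) = 0)
    (hdet : ∀ t, det2 (ξ (γ t)) (η (γ t)) > 0)
    (h1 : vD η (vD η (vD η f)) p = 0)
    (h2 : LinearIndependent ℝ ![vD ξ f p, vD η (vD η f) p])
    (h3 : ¬ LinearIndependent ℝ ![vD ξ (vD η (vD η (vD η f))) p, vD η (vD η f) p]) :
    ∃ (ε : ℝ), 0 < ε ∧ ∃ c : ℝ → R2, ContDiffOn ℝ (⊤ : ℕ∞) c (Set.Ioo (-ε) ε) ∧
      c 0 = p ∧ deriv c 0 ≠ 0 ∧ (∃ k : ℝ, deriv c 0 = k • η p) ∧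
      ∃ l : ℝ,
        iteratedDeriv 2 (f ∘ c) 0 ≠ 0 ∧
        iteratedDeriv 3 (f ∘ c) 0 = l • iteratedDeriv 2 (f ∘ c) 0 ∧
        det3 (fderiv ℝ f p (deriv γ 0)) (iteratedDeriv 2 (f ∘ c) 0)
            ((3 : ℝ) • iteratedDeriv 5 (f ∘ c) 0 - (10 * l) • iteratedDeriv 4 (f ∘ c) 0)
          = 3 * det3 (vD ξ f p) (vD η (vD η f) p)
              (vD η (vD η (vD η (vD η (vD η f)))) p) := by
  classical
  have hinf1 : (∞ : WithTop ℕ∞) + 1 ≤ (∞ : WithTop ℕ∞) := by exact_mod_cast le_top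
  have hone : (1 : WithTop ℕ∞) ≤ (∞ : WithTop ℕ∞) := by exact_mod_cast le_top
  have hf' : ContDiff ℝ ∞ f := hf.of_le (by simp)
  have hη' : ContDiff ℝ ∞ η := hηsm.of_le (by simp)
  -- the integral curve of η through p
  obtain ⟨σ, hσ0, ε, hε, hσode⟩ :=
    ContDiffAt.exists_forall_mem_closedBall_exists_eq_forall_mem_Ioo_hasDerivAt₀ (x₀ := p) ((hηsm.of_le (by simp)).contDiffAt) (0 : ℝ)
  rw [zero_sub, zero_add] at hσode
  set s : Set ℝ := Set.Ioo (-ε) ε with hs_def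
  have hsopen : IsOpen s := isOpen_Ioo
  have h0s : (0 : ℝ) ∈ s := by constructor <;> simp [hε] <;> linarith
  -- bootstrap: σ is C^∞ (in the ℕ∞ sense) on s
  have hσsm : ∀ m : ℕ, ContDiffOn ℝ m σ s := by
    intro m
    induction m with
    | zero =>
      rw [show ((0 : ℕ) : WithTop ℕ∞) = 0 from rfl, contDiffOn_zero]
      exact fun t ht => (hσode t ht).continuousAt.continuousWithinAt
    | succ m ih =>
      rw [show ((m + 1 : ℕ) : WithTop ℕ∞) = (m : ℕ) + 1 by norm_cast]
      rw [contDiffOn_succ_iff_derivWithin hsopen.uniqueDiffOn]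
      refine ⟨fun t ht => (hσode t ht).differentiableAt.differentiableWithinAt, ?_, ?_⟩
      · intro hω; exact absurd hω (by simp)
      · refine ContDiffOn.congr ((hηsm.of_le (by exact_mod_cast le_top)).comp_contDiffOn ih) ?_
        intro t ht
        exact (hσode t ht).hasDerivWithinAt.derivWithin (hsopen.uniqueDiffOn t ht)
  have hσOn : ContDiffOn ℝ ∞ σ s := contDiffOn_infty.mpr hσsm
  -- a cutoff reparametrization to make the curve globally smooth
  have hε4 : (0 : ℝ) < ε / 4 := by linarith
  let bump : ContDiffBump (0 : ℝ) := ⟨ε / 4, ε / 2, hε4, by linarith⟩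
  let ρ : ℝ → ℝ := fun t => t * bump t
  have hρsm : ContDiff ℝ ∞ ρ := contDiff_id.mul bump.contDiff
  have hρmem : ∀ t, ρ t ∈ s := by
    intro t
    rcases le_or_gt (ε / 2) (|t|) with h | h
    · have : bump t = 0 := bump.zero_of_le_dist (by simpa [Real.dist_eq] using h)
      simp only [ρ, this, mul_zero]
      exact ⟨by linarith, by linarith⟩
    · have h1 : |ρ t| ≤ |t| := by
        have := bump.nonneg (x := t)
        have := bump.le_one (x := t)
        calc |ρ t| = |t| * |bump t| := abs_mul _ _
        _ ≤ |t| * 1 := by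
            apply mul_le_mul_of_nonneg_left _ (abs_nonneg t)
            rw [abs_of_nonneg bump.nonneg]; exact bump.le_one
        _ = |t| := mul_one _
      have : |ρ t| < ε := by linarith
      exact abs_lt.mp this
  set τ : ℝ → R2 := σ ∘ ρ with hτ_def
  have hτsm : ContDiff ℝ ∞ τ := hσOn.comp_contDiff hρsm hρmem
  set s' : Set ℝ := Set.Ioo (-(ε / 4)) (ε / 4) with hs'_def
  have hs'open : IsOpen s' := isOpen_Ioo
  have h0s' : (0 : ℝ) ∈ s' := ⟨by linarith, by linarith⟩
  have hτeq : ∀ t ∈ s', τ t = σ t := by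
    intro t ht
    have h1 : bump t = 1 := bump.one_of_mem_closedBall
      (by simp only [Metric.mem_closedBall, Real.dist_eq, sub_zero]
          exact abs_le.mpr ⟨by linarith [ht.1, show bump.rIn = ε / 4 from rfl], le_of_lt ht.2⟩)
    simp [τ, ρ, h1]
  have hτ0 : τ 0 = p := by rw [hτeq 0 h0s', hσ0]
  have hode' : ∀ t ∈ s', HasDerivAt τ (η (τ t)) t := by
    intro t ht
    have hts : t ∈ s := ⟨by linarith [ht.1], by linarith [ht.2]⟩
    have h1 : HasDerivAt σ (η (σ t)) t := hσode t hts
    have h2 : τ =ᶠ[nhds t] σ := Filter.eventuallyEq_of_mem (hs'open.mem_nhds ht) hτeq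
    rw [hτeq t ht]
    exact h1.congr_of_eventuallyEq h2
  -- the iterated vector-field derivatives
  set G : ℕ → R2 → R3 := fun k => Nat.rec f (fun _ Fk => vD η Fk) k with hG_def
  have hGsucc : ∀ k, G (k + 1) = vD η (G k) := fun k => rfl
  have hGsm : ∀ k, ContDiff ℝ ∞ (G k) := by
    intro k
    induction k with
    | zero => exact hf'
    | succ k ih =>
      rw [hGsucc]
      exact (ih.fderiv_right hinf1).clm_apply hη'
  have hkey : ∀ k, ∀ t ∈ s', HasDerivAt (G k ∘ τ) (G (k + 1) (τ t)) t := by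
    intro k t ht
    have h1 := ((hGsm k).differentiable (by simp)).differentiableAt.hasFDerivAt.comp_hasDerivAt t
      (hode' t ht)
    exact h1
  have hiter : ∀ k, Set.EqOn (iteratedDeriv k (f ∘ τ)) (fun t => G k (τ t)) s' := by
    intro k
    induction k with
    | zero => intro t ht; simp [iteratedDeriv_zero]; rfl
    | succ k ih =>
      intro t ht
      rw [iteratedDeriv_succ]
      have hev : iteratedDeriv k (f ∘ τ) =ᶠ[nhds t] fun u => G k (τ u) :=
        Filter.eventuallyEq_of_mem (hs'open.mem_nhds ht) ih
      rw [hev.deriv_eq]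
      exact (hkey k t ht).deriv
  have hval : ∀ k, iteratedDeriv k (f ∘ τ) 0 = G k p := by
    intro k
    exact (hiter k h0s').trans (by show G k (τ 0) = G k p; rw [hτ0])
  -- the Taylor polynomial curve
  set d : ℕ → R2 := fun j => iteratedDeriv j τ 0 with hd_def
  set c : ℝ → R2 := fun t => ∑ j ∈ Finset.range 6, (t ^ j / (j.factorial : ℝ)) • d j with hc_def
  have hcsm : ContDiff ℝ (⊤ : ℕ∞) c := my_taylorPoly_contDiff 5 d
  have hcjet : ∀ j ≤ 5, iteratedDeriv j c 0 = d j := fun j hj =>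
    my_taylorPoly_iteratedDeriv j 5 d hj
  have hcomp : ∀ k ≤ 5, iteratedDeriv k (f ∘ c) 0 = iteratedDeriv k (f ∘ τ) 0 := by
    refine my_jet_comp 5 c τ (hcsm.of_le (by simp)) hτsm (fun j hj => ?_) f hf'
    rw [hcjet j hj]
  have hcompG : ∀ k ≤ 5, iteratedDeriv k (f ∘ c) 0 = G k p := fun k hk => by
    rw [hcomp k hk, hval k]
  have hηp : η p ≠ 0 := by
    intro h0
    have := hdet 0
    rw [hγ0, h0] at this
    simp [det2] at this
  have hc0 : c 0 = p := by
    have := hcjet 0 (by norm_num)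
    rw [iteratedDeriv_zero] at this
    rw [this, hd_def]
    simp only [iteratedDeriv_zero]
    exact hτ0
  have hc1 : deriv c 0 = η p := by
    have h1 := hcjet 1 (by norm_num)
    rw [iteratedDeriv_one] at h1
    rw [h1, hd_def]
    simp only [iteratedDeriv_one]
    rw [(hode' 0 h0s').deriv, hτ0]
  refine ⟨1, one_pos, c, hcsm.contDiffOn, hc0, ?_, ⟨1, by rw [hc1, one_smul]⟩, 0, ?_, ?_, ?_⟩
  · rw [hc1]; exact hηp
  · rw [hcompG 2 (by norm_num)]
    have h2' := h2.ne_zero 1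
    exact (by simpa using h2' : vD η (vD η f) p ≠ 0)
  · rw [hcompG 3 (by norm_num), hcompG 2 (by norm_num), zero_smul]
    exact h1
  · rw [hcompG 2 (by norm_num), hcompG 4 (by norm_num), hcompG 5 (by norm_num)]
    have hA : fderiv ℝ f p (deriv γ 0) = vD ξ f p := by
      rw [← hξγ 0, hγ0]; rfl
    rw [hA, mul_zero, zero_smul, sub_zero]
    have hG2 : G 2 p = vD η (vD η f) p := rfl
    have hG5 : G 5 p = vD η (vD η (vD η (vD η (vD η f)))) p := rfl
    rw [hG2, hG5]
    obtain ⟨e1, e2, e3⟩ := vD η (vD η (vD η (vD η (vD η f)))) p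
    simp only [det3, Prod.smul_mk, smul_eq_mul]
    ring
end
end

section
/- Let f be a generalized timelike minimal surface with real Weierstrass data (g1, g2, ω1 du, ω2 dv) and let p be an ω-singular point with rank(df_p) = 1. If ω1(p) = 0, then f is a front at p if and only if (g1)_u(p) ≠ 0; if ω2(p) = 0, then f is a front at p if and only if (g2)_v(p) ≠ 0. -/
noncomputable section

open Real Filter

def Nv : R2 → R3 := fun z => (z.1 + z.2, -z.1 + z.2, 1 + z.1 * z.2)
def Qf : R2 → ℝ := fun z => (1 - z.1 * z.2) ^ 2 + 2 * (z.1 + z.2) ^ 2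
def mv : R2 → R3 := fun z => (Real.sqrt (Qf z))⁻¹ • Nv z

lemma Qf_pos (z : R2) : 0 < Qf z := by
  have h : Qf z = (1 + z.1 * z.2) ^ 2 + 2 * z.1 ^ 2 + 2 * z.2 ^ 2 := by
    simp only [Qf]; ring
  rw [h]
  rcases eq_or_ne (1 + z.1 * z.2) 0 with h0 | h0
  · have : z.1 ≠ 0 := by intro hz; rw [hz] at h0; simp at h0
    nlinarith [sq_nonneg (1 + z.1*z.2), sq_nonneg z.2, sq_pos_of_ne_zero this]
  · nlinarith [sq_pos_of_ne_zero h0, sq_nonneg z.1, sq_nonneg z.2]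

lemma clm_eval {F : Type*} [NormedAddCommGroup F] [NormedSpace ℝ F]
    (T : R2 →L[ℝ] F) (a b : ℝ) : T (a, b) = a • T (1, 0) + b • T (0, 1) := by
  have h : ((a, b) : R2) = a • ((1:ℝ), (0:ℝ)) + b • ((0:ℝ), (1:ℝ)) := by
    simp [Prod.ext_iff]
  rw [h, map_add, map_smul, map_smul]

lemma Au_ne (x y e : ℝ) :
    (Real.sqrt (Qf (x, y)))⁻¹ • ((1:ℝ), (-1:ℝ), y) + e • Nv (x, y) ≠ (0 : R3) := by
  intro h
  set u := (Real.sqrt (Qf (x, y)))⁻¹ with hu_def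
  have hu : 0 < u := by
    rw [hu_def]
    exact inv_pos.mpr (Real.sqrt_pos.mpr (Qf_pos _))
  have h1 : u * 1 + e * (x + y) = 0 := congrArg (fun w : R3 => w.1) h
  have h2 : u * (-1) + e * (-x + y) = 0 := congrArg (fun w : R3 => w.2.1) h
  have h3 : u * y + e * (1 + x * y) = 0 := congrArg (fun w : R3 => w.2.2) h
  have hey : e * y = 0 := by nlinarith [h1, h2]
  have hex : e * x = -u := by nlinarith [h1, h2]
  have h4 : e * x * y = 0 := by rw [show e * x * y = e * y * x from by ring, hey, zero_mul]
  have he : e = -(u * y) := by linear_combination h3 - h4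
  have hy : y = 0 := by nlinarith [hey, he, hu, sq_nonneg y]
  have : e = 0 := by rw [he, hy]; ring
  rw [this] at hex
  nlinarith [hex, hu]

lemma Bv_ne (x y e : ℝ) :
    (Real.sqrt (Qf (x, y)))⁻¹ • ((1:ℝ), (1:ℝ), x) + e • Nv (x, y) ≠ (0 : R3) := by
  intro h
  set u := (Real.sqrt (Qf (x, y)))⁻¹ with hu_def
  have hu : 0 < u := by
    rw [hu_def]
    exact inv_pos.mpr (Real.sqrt_pos.mpr (Qf_pos _))
  have h1 : u * 1 + e * (x + y) = 0 := congrArg (fun w : R3 => w.1) h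
  have h2 : u * 1 + e * (-x + y) = 0 := congrArg (fun w : R3 => w.2.1) h
  have h3 : u * x + e * (1 + x * y) = 0 := congrArg (fun w : R3 => w.2.2) h
  have hex : e * x = 0 := by nlinarith [h1, h2]
  have hey : e * y = -u := by nlinarith [h1, h2]
  have h4 : e * x * y = 0 := by rw [hex, zero_mul]
  have he : e = -(u * x) := by linear_combination h3 - h4
  have hx : x = 0 := by nlinarith [hex, he, hu, sq_nonneg x]
  have : e = 0 := by rw [he, hx]; ring
  rw [this] at hey
  nlinarith [hey, hu]

lemma mv_hasFDerivAt (z : R2) :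
    ∃ L : R2 →L[ℝ] R3, HasFDerivAt mv L z ∧
      (∃ e : ℝ, L (1, 0) = (Real.sqrt (Qf z))⁻¹ • ((1:ℝ), (-1:ℝ), z.2) + e • Nv z) ∧
      (∃ e : ℝ, L (0, 1) = (Real.sqrt (Qf z))⁻¹ • ((1:ℝ), (1:ℝ), z.1) + e • Nv z) := by
  have hQpos : 0 < Qf z := Qf_pos z
  have hQdiff : DifferentiableAt ℝ Qf z := by
    apply DifferentiableAt.add
    · exact (((differentiableAt_const _).sub
        (differentiableAt_fst.mul differentiableAt_snd)).pow 2)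
    · exact ((differentiableAt_const _).mul
        ((differentiableAt_fst.add differentiableAt_snd).pow 2))
  have hsqrt_ne : Real.sqrt (Qf z) ≠ 0 := ne_of_gt (Real.sqrt_pos.mpr hQpos)
  have hc : DifferentiableAt ℝ (fun w => (Real.sqrt (Qf w))⁻¹) z := by
    have h1 : DifferentiableAt ℝ (fun t => (Real.sqrt t)⁻¹) (Qf z) :=
      ((Real.hasDerivAt_sqrt (ne_of_gt hQpos)).differentiableAt).inv hsqrt_ne
    exact h1.comp z hQdiff
  -- derivative of Nv
  have hN1 : HasFDerivAt (fun w : R2 => w.1 + w.2)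
      (ContinuousLinearMap.fst ℝ ℝ ℝ + ContinuousLinearMap.snd ℝ ℝ ℝ) z :=
    hasFDerivAt_fst.add hasFDerivAt_snd
  have hN2 : HasFDerivAt (fun w : R2 => -w.1 + w.2)
      (-ContinuousLinearMap.fst ℝ ℝ ℝ + ContinuousLinearMap.snd ℝ ℝ ℝ) z :=
    hasFDerivAt_fst.neg.add hasFDerivAt_snd
  have hN3 : HasFDerivAt (fun w : R2 => 1 + w.1 * w.2)
      (0 + (z.1 • ContinuousLinearMap.snd ℝ ℝ ℝ + z.2 • ContinuousLinearMap.fst ℝ ℝ ℝ)) z :=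
    (hasFDerivAt_const 1 z).add (hasFDerivAt_fst.mul hasFDerivAt_snd)
  have hN : HasFDerivAt Nv
      ((ContinuousLinearMap.fst ℝ ℝ ℝ + ContinuousLinearMap.snd ℝ ℝ ℝ).prod
        ((-ContinuousLinearMap.fst ℝ ℝ ℝ + ContinuousLinearMap.snd ℝ ℝ ℝ).prod
          (0 + (z.1 • ContinuousLinearMap.snd ℝ ℝ ℝ + z.2 • ContinuousLinearMap.fst ℝ ℝ ℝ)))) z :=
    hN1.prodMk (hN2.prodMk hN3)
  have hm : HasFDerivAt mv _ z := (hc.hasFDerivAt).smul hN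
  refine ⟨_, hm, ⟨fderiv ℝ (fun w => (Real.sqrt (Qf w))⁻¹) z (1, 0), ?_⟩,
    ⟨fderiv ℝ (fun w => (Real.sqrt (Qf w))⁻¹) z (0, 1), ?_⟩⟩ <;>
  · simp [ContinuousLinearMap.add_apply, ContinuousLinearMap.prod_apply,
      ContinuousLinearMap.smul_apply, ContinuousLinearMap.neg_apply,
      ContinuousLinearMap.smulRight_apply, ContinuousLinearMap.coe_fst',
      ContinuousLinearMap.coe_snd', Prod.ext_iff, smul_eq_mul, Nv]

set_option maxHeartbeats 1000000 in
/-- front condition at a rank-one ω-singular point. -/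
theorem front_condition_at_omega_singular_point
    (f : R2 → R3) (g1 g2 w1 w2 : ℝ → ℝ) (hf : IsGTMS f g1 g2 w1 w2)
    (p : R2) (hω : w1 p.1 * w2 p.2 = 0) (hrank : RankOne f p) :
    (w1 p.1 = 0 → (IsFrontAt f g1 g2 p ↔ deriv g1 p.1 ≠ 0)) ∧
    (w2 p.2 = 0 → (IsFrontAt f g1 g2 p ↔ deriv g2 p.2 ≠ 0)) := by
  classical
  have hfd : DifferentiableAt ℝ f p := (hf.smooth_f.differentiable (by simp)).differentiableAt
  obtain ⟨L, hL, ⟨e1, hA⟩, ⟨e2, hB⟩⟩ := mv_hasFDerivAt (g1 p.1, g2 p.2)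
  have hg1d : HasDerivAt g1 (deriv g1 p.1) p.1 :=
    ((hf.smooth_g1.differentiable (by simp)) p.1).hasDerivAt
  have hg2d : HasDerivAt g2 (deriv g2 p.2) p.2 :=
    ((hf.smooth_g2.differentiable (by simp)) p.2).hasDerivAt
  have hG : HasFDerivAt (fun q : R2 => ((g1 q.1, g2 q.2) : R2))
      ((deriv g1 p.1 • ContinuousLinearMap.fst ℝ ℝ ℝ).prod
       (deriv g2 p.2 • ContinuousLinearMap.snd ℝ ℝ ℝ)) p :=
    (hg1d.comp_hasFDerivAt p hasFDerivAt_fst).prodMk (hg2d.comp_hasFDerivAt p hasFDerivAt_snd)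
  set LG : R2 →L[ℝ] R2 := (deriv g1 p.1 • ContinuousLinearMap.fst ℝ ℝ ℝ).prod
       (deriv g2 p.2 • ContinuousLinearMap.snd ℝ ℝ ℝ) with hLG_def
  set Dn : R2 →L[ℝ] R3 := L.comp LG with hDn_def
  have hgeq : gtmsNormal g1 g2 = fun q : R2 => mv ((g1 q.1, g2 q.2) : R2) := by
    funext q
    simp only [gtmsNormal, mv, Nv, Qf]
  have hn : HasFDerivAt (gtmsNormal g1 g2) Dn p := by
    rw [hgeq]
    exact hL.comp p hG
  have hDnu : Dn (1, 0) = deriv g1 p.1 • L (1, 0) := by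
    have h1 : LG ((1:ℝ), (0:ℝ)) = deriv g1 p.1 • ((1:ℝ), (0:ℝ)) := by
      rw [hLG_def]
      simp [Prod.ext_iff]
    rw [hDn_def, ContinuousLinearMap.comp_apply, h1, map_smul]
  have hDnv : Dn (0, 1) = deriv g2 p.2 • L (0, 1) := by
    have h1 : LG ((0:ℝ), (1:ℝ)) = deriv g2 p.2 • ((0:ℝ), (1:ℝ)) := by
      rw [hLG_def]
      simp [Prod.ext_iff]
    rw [hDn_def, ContinuousLinearMap.comp_apply, h1, map_smul]
  set T : R2 →L[ℝ] R3 × R3 := (fderiv ℝ f p).prod Dn with hT_def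
  have hpair : HasFDerivAt (fun q => (f q, gtmsNormal g1 g2 q)) T p := hfd.hasFDerivAt.prodMk hn
  have hfront : IsFrontAt f g1 g2 p ↔ Function.Injective T := by
    rw [IsFrontAt, hpair.fderiv]
  have hTu : T ((1:ℝ), (0:ℝ)) = (pu f p, Dn (1, 0)) := rfl
  have hTv : T ((0:ℝ), (1:ℝ)) = (pv f p, Dn (0, 1)) := rfl
  have rank_ne : ¬ (pu f p = 0 ∧ pv f p = 0) := by
    rintro ⟨hu0, hv0⟩
    have hD : fderiv ℝ f p = 0 := by
      apply ContinuousLinearMap.ext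
      intro v
      calc fderiv ℝ f p v = fderiv ℝ f p (v.1, v.2) := rfl
        _ = v.1 • (fderiv ℝ f p (1, 0)) + v.2 • (fderiv ℝ f p (0, 1)) := clm_eval _ _ _
        _ = 0 := by
            rw [show fderiv ℝ f p ((1:ℝ), (0:ℝ)) = pu f p from rfl,
              show fderiv ℝ f p ((0:ℝ), (1:ℝ)) = pv f p from rfl, hu0, hv0]
            simp
        _ = (0 : R2 →L[ℝ] R3) v := by simp
    have hrank' : LinearMap.rank (fderiv ℝ f p).toLinearMap = 1 := hrank
    rw [hD] at hrank'
    simp at hrank'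
  have key : ∀ (a b : ℝ), T (a, b) = 0 →
      (a • pu f p + b • pv f p = 0 ∧ a • Dn (1, 0) + b • Dn (0, 1) = 0) := by
    intro a b hT0
    rw [clm_eval, hTu, hTv] at hT0
    constructor
    · exact congrArg Prod.fst hT0
    · exact congrArg Prod.snd hT0
  constructor
  · -- case w1 p.1 = 0
    intro h0
    have hu0 : pu f p = 0 := by
      rw [hf.deriv_u p, h0]
      simp [Prod.ext_iff]
    have hw2 : w2 p.2 ≠ 0 := by
      intro h0'
      refine rank_ne ⟨hu0, ?_⟩
      rw [hf.deriv_v p, h0']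
      simp [Prod.ext_iff]
    rw [hfront]
    constructor
    · intro hinj hg10
      have hT1 : T ((1:ℝ), (0:ℝ)) = 0 := by
        rw [hTu, hu0, hDnu, hg10, zero_smul]
        rfl
      have h10 : ((1:ℝ), (0:ℝ)) = (0 : R2) := hinj (by rw [hT1, map_zero])
      exact one_ne_zero (congrArg Prod.fst h10)
    · intro hg1ne v w hvw
      have hsub : T (v - w) = 0 := by rw [map_sub, hvw, sub_self]
      obtain ⟨h1, h2⟩ := key (v - w).1 (v - w).2 hsub
      have hb : (v - w).2 = 0 := by
        rw [hu0, smul_zero, zero_add] at h1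
        have h3 : (v - w).2 * ((1 + g2 p.2 ^ 2) * w2 p.2 / 2) = 0 := by
          have h4 := congrArg (fun r : R3 => r.1) h1
          rw [hf.deriv_v p] at h4
          simpa using h4
        have hne : (1 + g2 p.2 ^ 2) * w2 p.2 / 2 ≠ 0 :=
          div_ne_zero (mul_ne_zero (by positivity) hw2) two_ne_zero
        exact (mul_eq_zero.mp h3).resolve_right hne
      have ha : (v - w).1 = 0 := by
        rw [hb, zero_smul, add_zero, hDnu, smul_smul, hA] at h2
        rcases smul_eq_zero.mp h2 with h | h
        · exact (mul_eq_zero.mp h).resolve_right hg1ne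
        · exact absurd h (Au_ne (g1 p.1) (g2 p.2) e1)
      have : v - w = 0 := by
        rw [show v - w = ((v - w).1, (v - w).2) from rfl, ha, hb]
        rfl
      exact sub_eq_zero.mp this
  · -- case w2 p.2 = 0
    intro h0
    have hv0 : pv f p = 0 := by
      rw [hf.deriv_v p, h0]
      simp [Prod.ext_iff]
    have hw1 : w1 p.1 ≠ 0 := by
      intro h0'
      refine rank_ne ⟨?_, hv0⟩
      rw [hf.deriv_u p, h0']
      simp [Prod.ext_iff]
    rw [hfront]
    constructor
    · intro hinj hg20
      have hT1 : T ((0:ℝ), (1:ℝ)) = 0 := by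
        rw [hTv, hv0, hDnv, hg20, zero_smul]
        rfl
      have h10 : ((0:ℝ), (1:ℝ)) = (0 : R2) := hinj (by rw [hT1, map_zero])
      exact one_ne_zero (congrArg Prod.snd h10)
    · intro hg2ne v w hvw
      have hsub : T (v - w) = 0 := by rw [map_sub, hvw, sub_self]
      obtain ⟨h1, h2⟩ := key (v - w).1 (v - w).2 hsub
      have ha : (v - w).1 = 0 := by
        rw [hv0, smul_zero, add_zero] at h1
        have h3 : (v - w).1 * ((-1 - g1 p.1 ^ 2) * w1 p.1 / 2) = 0 := by
          have h4 := congrArg (fun r : R3 => r.1) h1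
          rw [hf.deriv_u p] at h4
          simpa using h4
        have hne : (-1 - g1 p.1 ^ 2) * w1 p.1 / 2 ≠ 0 := by
          refine div_ne_zero (mul_ne_zero ?_ hw1) two_ne_zero
          nlinarith [sq_nonneg (g1 p.1)]
        exact (mul_eq_zero.mp h3).resolve_right hne
      have hb : (v - w).2 = 0 := by
        rw [ha, zero_smul, zero_add, hDnv, smul_smul, hB] at h2
        rcases smul_eq_zero.mp h2 with h | h
        · exact (mul_eq_zero.mp h).resolve_right hg2ne
        · exact absurd h (Bv_ne (g1 p.1) (g2 p.2) e2)
      have : v - w = 0 := by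
        rw [show v - w = ((v - w).1, (v - w).2) from rfl, ha, hb]
        rfl
      exact sub_eq_zero.mp this
end
end

section
/- Let f be a generalized timelike minimal surface with real Weierstrass data (g1, g2, ω1 du, ω2 dv) and let p be an ω-singular point with rank(df_p) = 1. If ω1(p) = 0, then p is a non-degenerate singular point if and only if (ω1)_u(p) ≠ 0 and g1(p)g2(p) ≠ 1; if ω2(p) = 0, then p is a non-degenerate singular point if and only if (ω2)_v(p) ≠ 0 and g1(p)g2(p) ≠ 1. -/
noncomputable section

open Real Filter

/-- Auxiliary: the quantity under the square root in the normal. -/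
def Efun (g1 g2 : ℝ → ℝ) : R2 → ℝ := fun q =>
  (1 - g1 q.1 * g2 q.2) ^ 2 + 2 * (g1 q.1 + g2 q.2) ^ 2

/-- Auxiliary: the smooth cofactor in the area density. -/
def cfun (g1 g2 : ℝ → ℝ) : R2 → ℝ := fun q =>
  -(2:ℝ)⁻¹ * ((1 - g1 q.1 * g2 q.2) * Efun g1 g2 q * (Real.sqrt (Efun g1 g2 q))⁻¹)

lemma Efun_pos (g1 g2 : ℝ → ℝ) (q : R2) : 0 < Efun g1 g2 q := by
  have h1 := sq_nonneg (g1 q.1 * g2 q.2)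
  have h2 := sq_nonneg (g1 q.1)
  have h3 := sq_nonneg (g2 q.2)
  have h4 := sq_nonneg (g1 q.1 + g2 q.2)
  unfold Efun
  nlinarith

lemma areaDensity_eq {f : R2 → R3} {g1 g2 w1 w2 : ℝ → ℝ}
    (hf : IsGTMS f g1 g2 w1 w2) :
    areaDensity f g1 g2 = fun q => cfun g1 g2 q * (w1 q.1 * w2 q.2) := by
  funext q
  unfold areaDensity
  rw [hf.deriv_u q, hf.deriv_v q]
  simp only [gtmsNormal, det3, cfun, Efun, Prod.smul_fst, Prod.smul_snd, smul_eq_mul]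
  ring

lemma not_rankOne_of_w_zero {f : R2 → R3} {g1 g2 w1 w2 : ℝ → ℝ}
    (hf : IsGTMS f g1 g2 w1 w2) (p : R2)
    (h1 : w1 p.1 = 0) (h2 : w2 p.2 = 0) : ¬ RankOne f p := by
  intro hr
  have hpu : pu f p = 0 := by
    rw [hf.deriv_u p, h1]; simp [Prod.ext_iff]
  have hpv : pv f p = 0 := by
    rw [hf.deriv_v p, h2]; simp [Prod.ext_iff]
  have h0 : fderiv ℝ f p = 0 := by
    refine ContinuousLinearMap.ext fun x => ?_
    have hx : (x : ℝ × ℝ) = x.1 • ((1 : ℝ), (0 : ℝ)) + x.2 • ((0 : ℝ), (1 : ℝ)) := by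
      apply Prod.ext <;> simp
    rw [hx, map_add, map_smul, map_smul]
    have e1 : fderiv ℝ f p ((1 : ℝ), (0 : ℝ)) = 0 := hpu
    have e2 : fderiv ℝ f p ((0 : ℝ), (1 : ℝ)) = 0 := hpv
    rw [e1, e2]; simp
  unfold RankOne at hr
  rw [h0] at hr
  simp at hr

lemma fderiv_areaDensity {f : R2 → R3} {g1 g2 w1 w2 : ℝ → ℝ}
    (hf : IsGTMS f g1 g2 w1 w2) (p : R2) :
    fderiv ℝ (areaDensity f g1 g2) p =
      cfun g1 g2 p • (w1 p.1 • (deriv w2 p.2 • ContinuousLinearMap.snd ℝ ℝ ℝ) +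
          w2 p.2 • (deriv w1 p.1 • ContinuousLinearMap.fst ℝ ℝ ℝ)) +
        (w1 p.1 * w2 p.2) • fderiv ℝ (cfun g1 g2) p := by
  have hg1d : DifferentiableAt ℝ (fun q : R2 => g1 q.1) p :=
    ((hf.smooth_g1.differentiable (by simp)) p.1).comp p differentiableAt_fst
  have hg2d : DifferentiableAt ℝ (fun q : R2 => g2 q.2) p :=
    ((hf.smooth_g2.differentiable (by simp)) p.2).comp p differentiableAt_snd
  have hEd : DifferentiableAt ℝ (Efun g1 g2) p := by
    unfold Efun
    exact (((differentiableAt_const (1:ℝ)).sub (hg1d.mul hg2d)).pow 2).add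
      (((hg1d.add hg2d).pow 2).const_mul 2)
  have hE0 : Efun g1 g2 p ≠ 0 := (Efun_pos g1 g2 p).ne'
  have hs0 : Real.sqrt (Efun g1 g2 p) ≠ 0 :=
    (Real.sqrt_pos.2 (Efun_pos g1 g2 p)).ne'
  have hcd : DifferentiableAt ℝ (cfun g1 g2) p := by
    unfold cfun
    exact ((((differentiableAt_const (1:ℝ)).sub (hg1d.mul hg2d)).mul hEd).mul
      ((hEd.sqrt hE0).inv hs0)).const_mul _
  have hfstF : HasFDerivAt (fun q : R2 => q.1) (ContinuousLinearMap.fst ℝ ℝ ℝ) p :=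
    (ContinuousLinearMap.fst ℝ ℝ ℝ).hasFDerivAt
  have hsndF : HasFDerivAt (fun q : R2 => q.2) (ContinuousLinearMap.snd ℝ ℝ ℝ) p :=
    (ContinuousLinearMap.snd ℝ ℝ ℝ).hasFDerivAt
  have hw1d : HasDerivAt w1 (deriv w1 p.1) p.1 :=
    ((hf.smooth_w1.differentiable (by simp)) p.1).hasDerivAt
  have hw2d : HasDerivAt w2 (deriv w2 p.2) p.2 :=
    ((hf.smooth_w2.differentiable (by simp)) p.2).hasDerivAt
  have hw1F : HasFDerivAt (fun q : R2 => w1 q.1)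
      (deriv w1 p.1 • ContinuousLinearMap.fst ℝ ℝ ℝ) p :=
    hw1d.comp_hasFDerivAt p hfstF
  have hw2F : HasFDerivAt (fun q : R2 => w2 q.2)
      (deriv w2 p.2 • ContinuousLinearMap.snd ℝ ℝ ℝ) p :=
    hw2d.comp_hasFDerivAt p hsndF
  have hWF : HasFDerivAt (fun q : R2 => w1 q.1 * w2 q.2)
      (w1 p.1 • (deriv w2 p.2 • ContinuousLinearMap.snd ℝ ℝ ℝ) +
        w2 p.2 • (deriv w1 p.1 • ContinuousLinearMap.fst ℝ ℝ ℝ)) p :=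
    hw1F.mul hw2F
  have htot : HasFDerivAt (fun q => cfun g1 g2 q * (w1 q.1 * w2 q.2))
      (cfun g1 g2 p • (w1 p.1 • (deriv w2 p.2 • ContinuousLinearMap.snd ℝ ℝ ℝ) +
          w2 p.2 • (deriv w1 p.1 • ContinuousLinearMap.fst ℝ ℝ ℝ)) +
        (w1 p.1 * w2 p.2) • fderiv ℝ (cfun g1 g2) p) p :=
    hcd.hasFDerivAt.mul hWF
  rw [areaDensity_eq hf]
  exact htot.fderiv

/-- non-degeneracy condition at a rank-one ω-singular point. -/
theorem nondegeneracy_condition_at_omega_singular_point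
    (f : R2 → R3) (g1 g2 w1 w2 : ℝ → ℝ) (hf : IsGTMS f g1 g2 w1 w2)
    (p : R2) (hω : w1 p.1 * w2 p.2 = 0) (hrank : RankOne f p) :
    (w1 p.1 = 0 →
      (fderiv ℝ (areaDensity f g1 g2) p ≠ 0 ↔
        (deriv w1 p.1 ≠ 0 ∧ g1 p.1 * g2 p.2 ≠ 1))) ∧
    (w2 p.2 = 0 →
      (fderiv ℝ (areaDensity f g1 g2) p ≠ 0 ↔
        (deriv w2 p.2 ≠ 0 ∧ g1 p.1 * g2 p.2 ≠ 1))) := by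
  have hE0 : Efun g1 g2 p ≠ 0 := (Efun_pos g1 g2 p).ne'
  have hs0 : Real.sqrt (Efun g1 g2 p) ≠ 0 :=
    (Real.sqrt_pos.2 (Efun_pos g1 g2 p)).ne'
  have hcval : ∀ (hAB : g1 p.1 * g2 p.2 ≠ 1), cfun g1 g2 p ≠ 0 := by
    intro hAB
    have h1 : (1 : ℝ) - g1 p.1 * g2 p.2 ≠ 0 := sub_ne_zero.2 (Ne.symm hAB)
    exact mul_ne_zero (neg_ne_zero.2 (inv_ne_zero two_ne_zero))
      (mul_ne_zero (mul_ne_zero h1 hE0) (inv_ne_zero hs0))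
  have hczero : g1 p.1 * g2 p.2 = 1 → cfun g1 g2 p = 0 := by
    intro hAB
    simp [cfun, hAB]
  constructor
  · intro hw1
    have hw2 : w2 p.2 ≠ 0 := fun h => not_rankOne_of_w_zero hf p hw1 h hrank
    have hd : fderiv ℝ (areaDensity f g1 g2) p =
        (cfun g1 g2 p * (w2 p.2 * deriv w1 p.1)) • ContinuousLinearMap.fst ℝ ℝ ℝ := by
      rw [fderiv_areaDensity hf p, hw1]
      simp [smul_smul]
    rw [hd]
    constructor
    · intro hne
      have hk : cfun g1 g2 p * (w2 p.2 * deriv w1 p.1) ≠ 0 := by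
        intro h0; exact hne (by rw [h0, zero_smul])
      constructor
      · intro h0; exact hk (by rw [h0, mul_zero, mul_zero])
      · intro hAB; exact hk (by rw [hczero hAB, zero_mul])
    · rintro ⟨hd1, hAB⟩
      have hk : cfun g1 g2 p * (w2 p.2 * deriv w1 p.1) ≠ 0 :=
        mul_ne_zero (hcval hAB) (mul_ne_zero hw2 hd1)
      intro h0
      apply hk
      have := congrArg (fun T : R2 →L[ℝ] ℝ => T ((1 : ℝ), (0 : ℝ))) h0
      simpa using this
  · intro hw2
    have hw1 : w1 p.1 ≠ 0 := fun h => not_rankOne_of_w_zero hf p h hw2 hrank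
    have hd : fderiv ℝ (areaDensity f g1 g2) p =
        (cfun g1 g2 p * (w1 p.1 * deriv w2 p.2)) • ContinuousLinearMap.snd ℝ ℝ ℝ := by
      rw [fderiv_areaDensity hf p, hw2]
      simp [smul_smul]
    rw [hd]
    constructor
    · intro hne
      have hk : cfun g1 g2 p * (w1 p.1 * deriv w2 p.2) ≠ 0 := by
        intro h0; exact hne (by rw [h0, zero_smul])
      constructor
      · intro h0; exact hk (by rw [h0, mul_zero, mul_zero])
      · intro hAB; exact hk (by rw [hczero hAB, zero_mul])
    · rintro ⟨hd2, hAB⟩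
      have hk : cfun g1 g2 p * (w1 p.1 * deriv w2 p.2) ≠ 0 :=
        mul_ne_zero (hcval hAB) (mul_ne_zero hw1 hd2)
      intro h0
      apply hk
      have := congrArg (fun T : R2 →L[ℝ] ℝ => T ((0 : ℝ), (1 : ℝ))) h0
      simpa using this
end
end

section
/- Let f be a generalized timelike minimal surface with real Weierstrass data (g1, g2, ω1 du, ω2 dv) and let p = (0,0) be a non-degenerate ω-singular point with rank(df_p) = 1, ω2(p) = 0 and (g2)_v(p) = 0 (so ω1(p) ≠ 0 and (ω2)_v(p) ≠ 0). Set a = ((ω2)_v/ω1)·((g1+g2)/(1+g1^2))^2 evaluated at p, b = ((ω2)_{vv}/(2ω1))·((g1+g2)/(1+g1^2))^2 evaluated at p, and define the vector field η̃(u,v) = (a v + b v^2) ∂/∂u + ∂/∂v and ξ = ∂/∂u. Then the Euclidean inner products satisfy <ξf, η̃^2 f>_E(p) = <ξf, η̃^3 f>_E(p) = 0, and η̃^3 f(p) = C · η̃^2 f(p) with C = (ω2)_{vv}(p)/(ω2)_v(p). -/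
noncomputable section

open Real Filter

open ContinuousLinearMap in
set_option maxHeartbeats 2000000 in
/-- the modified null vector field `η̃` satisfies the orthogonality
conditions and `η̃³f(p) = C·η̃²f(p)` with `C = (ω2)_vv(p)/(ω2)_v(p)`. -/
theorem modified_null_vector_field_conditions
    (f : R2 → R3) (g1 g2 w1 w2 : ℝ → ℝ) (hf : IsGTMS f g1 g2 w1 w2)
    (hrank : RankOne f (0, 0))
    (hnondeg : fderiv ℝ (areaDensity f g1 g2) (0, 0) ≠ 0)
    (hw2 : w2 0 = 0) (hg2v : deriv g2 0 = 0)
    (hw1 : w1 0 ≠ 0) (hw2v : deriv w2 0 ≠ 0)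
    (a b C : ℝ)
    (ha : a = deriv w2 0 / w1 0 * ((g1 0 + g2 0) / (1 + g1 0 ^ 2)) ^ 2)
    (hb : b = deriv (deriv w2) 0 / (2 * w1 0) * ((g1 0 + g2 0) / (1 + g1 0 ^ 2)) ^ 2)
    (hC : C = deriv (deriv w2) 0 / deriv w2 0)
    (ξ ηt : R2 → R2)
    (hξ : ξ = fun _ => (1, 0))
    (hηt : ηt = fun q => (a * q.2 + b * q.2 ^ 2, 1)) :
    ip3 (vD ξ f (0, 0)) (vD ηt (vD ηt f) (0, 0)) = 0 ∧
    ip3 (vD ξ f (0, 0)) (vD ηt (vD ηt (vD ηt f)) (0, 0)) = 0 ∧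
    vD ηt (vD ηt (vD ηt f)) (0, 0) = C • vD ηt (vD ηt f) (0, 0) := by
  -- basic smoothness
  have hg1c : ContDiff ℝ (⊤:ℕ∞) g1 := hf.smooth_g1.of_le (by simp)
  have hg2c : ContDiff ℝ (⊤:ℕ∞) g2 := hf.smooth_g2.of_le (by simp)
  have hw1c : ContDiff ℝ (⊤:ℕ∞) w1 := hf.smooth_w1.of_le (by simp)
  have hw2c : ContDiff ℝ (⊤:ℕ∞) w2 := hf.smooth_w2.of_le (by simp)
  have hg2' : ContDiff ℝ (⊤:ℕ∞) (deriv g2) := (contDiff_infty_iff_deriv.mp hg2c).2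
  have hw2' : ContDiff ℝ (⊤:ℕ∞) (deriv w2) := (contDiff_infty_iff_deriv.mp hw2c).2
  have Hg1 : ∀ t, HasDerivAt g1 (deriv g1 t) t :=
    fun t => (hg1c.differentiable (by simp) t).hasDerivAt
  have Hg2 : ∀ t, HasDerivAt g2 (deriv g2 t) t :=
    fun t => (hg2c.differentiable (by simp) t).hasDerivAt
  have Hw1 : ∀ t, HasDerivAt w1 (deriv w1 t) t :=
    fun t => (hw1c.differentiable (by simp) t).hasDerivAt
  have Hw2 : ∀ t, HasDerivAt w2 (deriv w2 t) t :=
    fun t => (hw2c.differentiable (by simp) t).hasDerivAt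
  have Hg2' : ∀ t, HasDerivAt (deriv g2) (deriv (deriv g2) t) t :=
    fun t => (hg2'.differentiable (by simp) t).hasDerivAt
  have Hw2' : ∀ t, HasDerivAt (deriv w2) (deriv (deriv w2) t) t :=
    fun t => (hw2'.differentiable (by simp) t).hasDerivAt
  -- component functions
  set U1 : ℝ → ℝ := fun u => (-1 - g1 u ^ 2) * w1 u / 2 with hU1def
  set U2 : ℝ → ℝ := fun u => (1 - g1 u ^ 2) * w1 u / 2 with hU2def
  set U3 : ℝ → ℝ := fun u => g1 u * w1 u with hU3def
  set V1 : ℝ → ℝ := fun v => (1 + g2 v ^ 2) * w2 v / 2 with hV1def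
  set V2 : ℝ → ℝ := fun v => (1 - g2 v ^ 2) * w2 v / 2 with hV2def
  set V3 : ℝ → ℝ := fun v => -(g2 v * w2 v) with hV3def
  have hU1c : ContDiff ℝ (⊤:ℕ∞) U1 :=
    (((contDiff_const.sub (hg1c.pow 2)).mul hw1c).div_const 2)
  have hU2c : ContDiff ℝ (⊤:ℕ∞) U2 :=
    (((contDiff_const.sub (hg1c.pow 2)).mul hw1c).div_const 2)
  have hU3c : ContDiff ℝ (⊤:ℕ∞) U3 := hg1c.mul hw1c
  have hV1c : ContDiff ℝ (⊤:ℕ∞) V1 :=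
    (((contDiff_const.add (hg2c.pow 2)).mul hw2c).div_const 2)
  have hV2c : ContDiff ℝ (⊤:ℕ∞) V2 :=
    (((contDiff_const.sub (hg2c.pow 2)).mul hw2c).div_const 2)
  have hV3c : ContDiff ℝ (⊤:ℕ∞) V3 := (hg2c.mul hw2c).neg
  have HU1 : ∀ t, HasDerivAt U1 (deriv U1 t) t :=
    fun t => (hU1c.differentiable (by simp) t).hasDerivAt
  have HU2 : ∀ t, HasDerivAt U2 (deriv U2 t) t :=
    fun t => (hU2c.differentiable (by simp) t).hasDerivAt
  have HU3 : ∀ t, HasDerivAt U3 (deriv U3 t) t :=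
    fun t => (hU3c.differentiable (by simp) t).hasDerivAt
  have HV1 : ∀ t, HasDerivAt V1 (deriv V1 t) t :=
    fun t => (hV1c.differentiable (by simp) t).hasDerivAt
  have HV2 : ∀ t, HasDerivAt V2 (deriv V2 t) t :=
    fun t => (hV2c.differentiable (by simp) t).hasDerivAt
  have HV3 : ∀ t, HasDerivAt V3 (deriv V3 t) t :=
    fun t => (hV3c.differentiable (by simp) t).hasDerivAt
  have hU1' : ContDiff ℝ (⊤:ℕ∞) (deriv U1) := (contDiff_infty_iff_deriv.mp hU1c).2
  have hU2' : ContDiff ℝ (⊤:ℕ∞) (deriv U2) := (contDiff_infty_iff_deriv.mp hU2c).2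
  have hU3' : ContDiff ℝ (⊤:ℕ∞) (deriv U3) := (contDiff_infty_iff_deriv.mp hU3c).2
  have hV1' : ContDiff ℝ (⊤:ℕ∞) (deriv V1) := (contDiff_infty_iff_deriv.mp hV1c).2
  have hV2' : ContDiff ℝ (⊤:ℕ∞) (deriv V2) := (contDiff_infty_iff_deriv.mp hV2c).2
  have hV3' : ContDiff ℝ (⊤:ℕ∞) (deriv V3) := (contDiff_infty_iff_deriv.mp hV3c).2
  set Uf : ℝ → R3 := fun u => (U1 u, U2 u, U3 u) with hUfdef
  set Vf : ℝ → R3 := fun v => (V1 v, V2 v, V3 v) with hVfdef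
  set Uf' : ℝ → R3 := fun u => (deriv U1 u, deriv U2 u, deriv U3 u) with hUf'def
  set Vf' : ℝ → R3 := fun v => (deriv V1 v, deriv V2 v, deriv V3 v) with hVf'def
  have HUf : ∀ t, HasDerivAt Uf (Uf' t) t := fun t => (HasDerivAt.prodMk (HU1 t) (HasDerivAt.prodMk (HU2 t) (HU3 t)))
  have HVf : ∀ t, HasDerivAt Vf (Vf' t) t := fun t => (HasDerivAt.prodMk (HV1 t) (HasDerivAt.prodMk (HV2 t) (HV3 t)))
  have HUf' : ∀ t, HasDerivAt Uf' (deriv (deriv U1) t, deriv (deriv U2) t, deriv (deriv U3) t) t :=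
    fun t => (HasDerivAt.prodMk (hU1'.differentiable (by simp) t).hasDerivAt
      (HasDerivAt.prodMk ((hU2'.differentiable (by simp) t).hasDerivAt) (hU3'.differentiable (by simp) t).hasDerivAt))
  have HVf' : ∀ t, HasDerivAt Vf' (deriv (deriv V1) t, deriv (deriv V2) t, deriv (deriv V3) t) t :=
    fun t => (HasDerivAt.prodMk (hV1'.differentiable (by simp) t).hasDerivAt
      (HasDerivAt.prodMk ((hV2'.differentiable (by simp) t).hasDerivAt) (hV3'.differentiable (by simp) t).hasDerivAt))
  -- step 1 : first vector field derivative
  set A : R2 → ℝ := fun q => a * q.2 + b * q.2 ^ 2 with hAdef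
  have HA : ∀ q : R2, HasFDerivAt A
      (((1:ℝ→L[ℝ]ℝ).smulRight (a + 2 * b * q.2)).comp (snd ℝ ℝ ℝ)) q := by
    intro q
    have h : HasDerivAt (fun v : ℝ => a * v + b * v ^ 2) (a + 2 * b * q.2) q.2 := by
      have := ((hasDerivAt_id q.2).const_mul a).add (((hasDerivAt_id q.2).pow 2).const_mul b)
      refine HasDerivAt.congr_deriv this ?_
      simp; ring
    exact h.hasFDerivAt.comp q hasFDerivAt_snd
  have happ : ∀ (q : R2) (x : ℝ), fderiv ℝ f q (x, 1) = x • pu f q + pv f q := by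
    intro q x
    have h1 : ((x, 1) : R2) = x • ((1:ℝ),(0:ℝ)) + ((0:ℝ),(1:ℝ)) := by
      simp [Prod.ext_iff]
    rw [h1, map_add, map_smul]; rfl
  set G : R2 → R3 := fun q => A q • Uf q.1 + Vf q.2 with hGdef
  have hG : vD ηt f = G := by
    funext q
    show fderiv ℝ f q (ηt q) = G q
    rw [hηt]
    have := happ q (a * q.2 + b * q.2 ^ 2)
    rw [this, hf.deriv_u, hf.deriv_v]
  -- step 2 : second derivative as explicit function G2
  set G2 : R2 → R3 := fun q => (A q * A q) • Uf' q.1 + ((a + 2 * b * q.2) • Uf q.1 + Vf' q.2)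
    with hG2def
  have key2 : vD ηt G = G2 := by
    funext q
    show fderiv ℝ G q (ηt q) = G2 q
    have hu : HasFDerivAt (fun p : R2 => Uf p.1)
        (((1:ℝ→L[ℝ]ℝ).smulRight (Uf' q.1)).comp (fst ℝ ℝ ℝ)) q :=
      (HUf q.1).hasFDerivAt.comp q hasFDerivAt_fst
    have hv : HasFDerivAt (fun p : R2 => Vf p.2)
        (((1:ℝ→L[ℝ]ℝ).smulRight (Vf' q.2)).comp (snd ℝ ℝ ℝ)) q :=
      (HVf q.2).hasFDerivAt.comp q hasFDerivAt_snd
    have hGq : HasFDerivAt G _ q := ((HA q).smul hu).add hv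
    rw [hGq.fderiv, hηt]
    simp [hG2def, hAdef, smul_smul, add_assoc]
  -- step 3 : third derivative at the origin
  have hA0 : A (0,0) = 0 := by simp [hAdef]
  have key3 : vD ηt G2 (0,0) = (2 * b) • Uf 0 +
      (deriv (deriv V1) 0, deriv (deriv V2) 0, deriv (deriv V3) 0) := by
    show fderiv ℝ G2 (0,0) (ηt (0,0)) = _
    have hu' : HasFDerivAt (fun p : R2 => Uf' p.1)
        (((1:ℝ→L[ℝ]ℝ).smulRight
          (deriv (deriv U1) 0, deriv (deriv U2) 0, deriv (deriv U3) 0)).comp (fst ℝ ℝ ℝ)) (0,0) :=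
      by have h := (HasDerivAt.hasFDerivAt (HUf' 0)).comp ((0,0):R2)
           (hasFDerivAt_fst : HasFDerivAt (Prod.fst : R2 → ℝ) (fst ℝ ℝ ℝ) ((0,0):R2))
         exact h
    have hu : HasFDerivAt (fun p : R2 => Uf p.1)
        (((1:ℝ→L[ℝ]ℝ).smulRight (Uf' 0)).comp (fst ℝ ℝ ℝ)) ((0,0) : R2) :=
      by have h := (HUf 0).hasFDerivAt.comp ((0,0):R2)
           (hasFDerivAt_fst : HasFDerivAt (Prod.fst : R2 → ℝ) (fst ℝ ℝ ℝ) ((0,0):R2))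
         exact h
    have hv' : HasFDerivAt (fun p : R2 => Vf' p.2)
        (((1:ℝ→L[ℝ]ℝ).smulRight
          (deriv (deriv V1) 0, deriv (deriv V2) 0, deriv (deriv V3) 0)).comp (snd ℝ ℝ ℝ)) (0,0) :=
      by have h := (HVf' 0).hasFDerivAt.comp ((0,0):R2)
           (hasFDerivAt_snd : HasFDerivAt (Prod.snd : R2 → ℝ) (snd ℝ ℝ ℝ) ((0,0):R2))
         exact h
    have hc3 : HasFDerivAt (fun q : R2 => a + 2 * b * q.2)
        (((1:ℝ→L[ℝ]ℝ).smulRight (2 * b)).comp (snd ℝ ℝ ℝ)) (0,0) := by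
      have h : HasDerivAt (fun v : ℝ => a + 2 * b * v) (2 * b) (0:ℝ) := by
        exact ((hasDerivAt_const (0:ℝ) a).add ((hasDerivAt_id (0:ℝ)).const_mul (2*b))).congr_deriv (by simp)
      have h2 := h.hasFDerivAt.comp ((0,0):R2)
        (hasFDerivAt_snd : HasFDerivAt (Prod.snd : R2 → ℝ) (snd ℝ ℝ ℝ) ((0,0):R2))
      exact h2
    have hG2q : HasFDerivAt G2 _ (0,0) :=
      (((HA (0,0)).mul (HA (0,0))).smul hu').add ((hc3.smul hu).add hv')
    have hA0' : A ((0,0):R2) = 0 := hA0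
    rw [hG2q.fderiv, hηt]
    simp only [add_apply, coe_smul', Pi.smul_apply, comp_apply, coe_fst', coe_snd',
      smulRight_apply, one_apply, hA0', zero_mul, zero_smul, smul_zero, zero_add, mul_zero,
      mul_one, add_zero, one_smul]
    simp
  -- values of derivatives at 0
  have hdV1 : deriv V1 = fun v => (2 * g2 v * deriv g2 v * w2 v + (1 + g2 v ^ 2) * deriv w2 v)/2 := by
    funext v
    refine HasDerivAt.deriv ?_
    have := (((hasDerivAt_const v (1:ℝ)).add ((Hg2 v).pow 2)).mul (Hw2 v)).div_const 2
    refine HasDerivAt.congr_deriv this ?_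
    simp [hV1def]
    try ring
  have hdV2 : deriv V2 = fun v => (-(2 * g2 v * deriv g2 v) * w2 v + (1 - g2 v ^ 2) * deriv w2 v)/2 := by
    funext v
    refine HasDerivAt.deriv ?_
    have := (((hasDerivAt_const v (1:ℝ)).sub ((Hg2 v).pow 2)).mul (Hw2 v)).div_const 2
    refine HasDerivAt.congr_deriv this ?_
    simp [hV2def]
    try ring
  have hdV3 : deriv V3 = fun v => -(deriv g2 v * w2 v + g2 v * deriv w2 v) := by
    funext v
    refine HasDerivAt.deriv ?_
    exact ((Hg2 v).mul (Hw2 v)).neg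
  have hdV1_0 : deriv V1 0 = (1 + g2 0 ^ 2) * deriv w2 0 / 2 := by
    rw [hdV1]; simp only [hw2, hg2v]; ring
  have hdV2_0 : deriv V2 0 = (1 - g2 0 ^ 2) * deriv w2 0 / 2 := by
    rw [hdV2]; simp only [hw2, hg2v]; ring
  have hdV3_0 : deriv V3 0 = -(g2 0 * deriv w2 0) := by
    rw [hdV3]; simp only [hw2, hg2v]; ring
  have hddV1_0 : deriv (deriv V1) 0 = (1 + g2 0 ^ 2) * deriv (deriv w2) 0 / 2 := by
    rw [hdV1]
    have h := (((((Hg2 0).const_mul 2).mul (Hg2' 0)).mul (Hw2 0)).add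
        ((((Hg2 0).pow 2).const_add 1).mul (Hw2' 0))).div_const 2
    rw [show deriv (fun v => (2 * g2 v * deriv g2 v * w2 v + (1 + g2 v ^ 2) * deriv w2 v)/2) 0 = _ from h.deriv]
    simp only [hw2, hg2v, Pi.mul_apply, Pi.pow_apply, Pi.neg_apply]
    ring
  have hddV2_0 : deriv (deriv V2) 0 = (1 - g2 0 ^ 2) * deriv (deriv w2) 0 / 2 := by
    rw [hdV2]
    have h := (((((Hg2 0).const_mul 2).mul (Hg2' 0)).neg.mul (Hw2 0)).add
        ((((Hg2 0).pow 2).const_sub 1).mul (Hw2' 0))).div_const 2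
    rw [show deriv (fun v => (-(2 * g2 v * deriv g2 v) * w2 v + (1 - g2 v ^ 2) * deriv w2 v)/2) 0 = _ from h.deriv]
    simp only [hw2, hg2v, Pi.mul_apply, Pi.pow_apply, Pi.neg_apply]
    ring
  have hddV3_0 : deriv (deriv V3) 0 = -(g2 0 * deriv (deriv w2) 0) := by
    rw [hdV3]
    have h := (((Hg2' 0).mul (Hw2 0)).add ((Hg2 0).mul (Hw2' 0))).neg
    rw [show deriv (fun v => -(deriv g2 v * w2 v + g2 v * deriv w2 v)) 0 = _ from h.deriv]
    simp only [hw2, hg2v]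
    ring
  -- assemble
  have hxi : vD ξ f (0,0) = Uf 0 := by
    show fderiv ℝ f (0,0) (ξ (0,0)) = Uf 0
    rw [hξ]
    exact hf.deriv_u (0,0)
  have h2 : vD ηt (vD ηt f) (0,0) = G2 (0,0) := by rw [hG, key2]
  have h2' : G2 (0,0) = a • Uf 0 + Vf' 0 := by
    simp [hG2def, hAdef]
  have h3 : vD ηt (vD ηt (vD ηt f)) (0,0) = (2 * b) • Uf 0 +
      (deriv (deriv V1) 0, deriv (deriv V2) 0, deriv (deriv V3) 0) := by
    rw [hG, key2]; exact key3
  have h1pos : (1 + g1 0 ^ 2) ≠ 0 := by positivity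
  refine ⟨?_, ?_, ?_⟩
  · rw [hxi, h2, h2']
    simp only [hUfdef, hVf'def, hdV1_0, hdV2_0, hdV3_0, hU1def, hU2def, hU3def, ip3,
      Prod.smul_mk, Prod.mk_add_mk, smul_eq_mul]
    rw [ha]
    field_simp
    ring
  · rw [hxi, h3]
    simp only [hUfdef, hddV1_0, hddV2_0, hddV3_0, hU1def, hU2def, hU3def, ip3,
      Prod.smul_mk, Prod.mk_add_mk, smul_eq_mul]
    rw [hb]
    field_simp
    ring
  · rw [h3, h2, h2']
    simp only [hUfdef, hVf'def, hdV1_0, hdV2_0, hdV3_0, hddV1_0, hddV2_0, hddV3_0,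
      hU1def, hU2def, hU3def, Prod.smul_mk, Prod.mk_add_mk, smul_eq_mul, Prod.ext_iff]
    rw [ha, hb, hC]
    refine ⟨?_, ?_, ?_⟩ <;> (field_simp)
end
end

section
/- There is no cuspidal lips on any generalized timelike minimal surface in L^3: if f is a generalized timelike minimal surface with real Weierstrass data (g1, g2, ω1 du, ω2 dv), then for every point p the germ of f at p is not A-equivalent to the cuspidal lips f_CLP(u,v) = (v, u^3 + uv^2, 3u^4 + 2u^2v^2) at the origin. -/
noncomputable section

open Real Filter

namespace NCL

lemma fderiv_eval (F : R2 → R3) (x : R2) (s t : ℝ) :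
    fderiv ℝ F x (s, t) = s • pu F x + t • pv F x := by
  have h : (s, t) = s • ((1:ℝ), (0:ℝ)) + t • ((0:ℝ), (1:ℝ)) := by
    simp [Prod.ext_iff]
  rw [h, map_add, map_smul, map_smul]
  rfl

lemma ip3_add (ξ x y : R3) : ip3 ξ (x + y) = ip3 ξ x + ip3 ξ y := by
  simp [ip3]; ring

lemma ip3_sub (ξ x y : R3) : ip3 ξ (x - y) = ip3 ξ x - ip3 ξ y := by
  simp [ip3]; ring

lemma ip3_smul (ξ : R3) (s : ℝ) (x : R3) : ip3 ξ (s • x) = s * ip3 ξ x := by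
  simp [ip3, Prod.smul_def, smul_eq_mul]; ring

lemma ip3_bound (ξ z : R3) : |ip3 ξ z| ≤ (|ξ.1| + |ξ.2.1| + |ξ.2.2|) * ‖z‖ := by
  have h1 : |z.1| ≤ ‖z‖ := norm_fst_le z
  have h2 : |z.2.1| ≤ ‖z‖ := le_trans (norm_fst_le z.2) (norm_snd_le z)
  have h3 : |z.2.2| ≤ ‖z‖ := le_trans (norm_snd_le z.2) (norm_snd_le z)
  have hz : (0:ℝ) ≤ ‖z‖ := norm_nonneg _
  calc |ip3 ξ z| ≤ |ξ.1 * z.1| + |ξ.2.1 * z.2.1| + |ξ.2.2 * z.2.2| := by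
        simp only [ip3]; exact (abs_add_three (ξ.1 * z.1) (ξ.2.1 * z.2.1) (ξ.2.2 * z.2.2))
    _ ≤ |ξ.1| * ‖z‖ + |ξ.2.1| * ‖z‖ + |ξ.2.2| * ‖z‖ := by
        rw [abs_mul, abs_mul, abs_mul]
        have := abs_nonneg ξ.1
        have := abs_nonneg ξ.2.1
        have := abs_nonneg ξ.2.2
        nlinarith [mul_le_mul_of_nonneg_left h1 (abs_nonneg ξ.1),
          mul_le_mul_of_nonneg_left h2 (abs_nonneg ξ.2.1),
          mul_le_mul_of_nonneg_left h3 (abs_nonneg ξ.2.2)]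
    _ = (|ξ.1| + |ξ.2.1| + |ξ.2.2|) * ‖z‖ := by ring

lemma leftinv_fderiv {E F : Type*} [NormedAddCommGroup E] [NormedSpace ℝ E]
    [NormedAddCommGroup F] [NormedSpace ℝ F] {A : F → E} {B : E → F} {x : E}
    (hAB : ∀ᶠ z in nhds x, A (B z) = z) (hB : DifferentiableAt ℝ B x)
    (hA : DifferentiableAt ℝ A (B x)) :
    ∀ v, fderiv ℝ A (B x) (fderiv ℝ B x v) = v := by
  have h1 : fderiv ℝ (A ∘ B) x = fderiv ℝ (id : E → E) x := by
    apply Filter.EventuallyEq.fderiv_eq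
    exact hAB
  rw [fderiv_comp x hA hB, fderiv_id] at h1
  intro v
  have := congrArg (fun (L : E →L[ℝ] E) => L v) h1
  simpa using this

lemma inj_of_leftinv {E F : Type*} [NormedAddCommGroup E] [NormedSpace ℝ E]
    [NormedAddCommGroup F] [NormedSpace ℝ F] {A : F → E} {B : E → F} {x : E}
    (hAB : ∀ᶠ z in nhds x, A (B z) = z) (hB : DifferentiableAt ℝ B x)
    (hA : DifferentiableAt ℝ A (B x)) :
    Function.Injective (fderiv ℝ B x) := by
  intro z w h
  have h1 := leftinv_fderiv hAB hB hA z
  have h2 := leftinv_fderiv hAB hB hA w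
  rw [← h1, ← h2, h]

end NCL
namespace NCL2
open NCL

lemma fCLP_eq : fCLP = (fun q : R2 =>
    ((q.2 : ℝ), (q.1*q.1*q.1 + q.1*(q.2*q.2), 3*(q.1*q.1*q.1*q.1) + 2*((q.1*q.1)*(q.2*q.2))))) := by
  funext q
  simp only [fCLP, Prod.mk.injEq]
  refine ⟨trivial, by ring, by ring⟩

lemma fCLP_hasD (q : R2) : ∃ D : R2 →L[ℝ] R3, HasFDerivAt fCLP D q ∧
    D (1,0) = (0, 3*q.1^2+q.2^2, 12*q.1^3+4*q.1*q.2^2) ∧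
    D (0,1) = (1, 2*(q.1*q.2), 4*(q.1^2*q.2)) := by
  have h1 : HasFDerivAt (fun q : R2 => q.1) (ContinuousLinearMap.fst ℝ ℝ ℝ) q := hasFDerivAt_fst
  have h2 : HasFDerivAt (fun q : R2 => q.2) (ContinuousLinearMap.snd ℝ ℝ ℝ) q := hasFDerivAt_snd
  have hu2 := h1.mul h1
  have hu3 := hu2.mul h1
  have hu4 := hu3.mul h1
  have hv2 := h2.mul h2
  have huv2 := h1.mul hv2
  have hc2 := hu3.add huv2
  have hu2v2 := hu2.mul hv2
  have hc3 := (hu4.const_mul (3:ℝ)).add (hu2v2.const_mul (2:ℝ))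
  have hD := h2.prodMk (hc2.prodMk hc3)
  rw [fCLP_eq]
  refine ⟨_, hD, ?_, ?_⟩ <;>
  · simp [ContinuousLinearMap.prod_apply, ContinuousLinearMap.add_apply,
      ContinuousLinearMap.smul_apply, ContinuousLinearMap.coe_fst', ContinuousLinearMap.coe_snd',
      Prod.ext_iff, smul_eq_mul]
    try norm_num
    try ring_nf
    try norm_num

lemma fCLP_diffAt (q : R2) : DifferentiableAt ℝ fCLP q :=
  ((fCLP_hasD q).choose_spec.1).differentiableAt

lemma pu_fCLP (q : R2) : pu fCLP q = (0, 3*q.1^2+q.2^2, 12*q.1^3+4*q.1*q.2^2) := by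
  obtain ⟨D, hD, hD1, _⟩ := fCLP_hasD q
  rw [pu, hD.fderiv]; exact hD1

lemma pv_fCLP (q : R2) : pv fCLP q = (1, 2*(q.1*q.2), 4*(q.1^2*q.2)) := by
  obtain ⟨D, hD, _, hD2⟩ := fCLP_hasD q
  rw [pv, hD.fderiv]; exact hD2

lemma inj_fCLP {q : R2} (hq : q ≠ ((0:ℝ),(0:ℝ))) : Function.Injective (fderiv ℝ fCLP q) := by
  have h3 : 3*q.1^2 + q.2^2 ≠ 0 := by
    intro h
    apply hq
    have hq1 : q.1 = 0 := by nlinarith [sq_nonneg q.1, sq_nonneg q.2]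
    have hq2 : q.2 = 0 := by nlinarith [sq_nonneg q.1, sq_nonneg q.2]
    exact Prod.ext hq1 hq2
  intro z w hzw
  have h0 : fderiv ℝ fCLP q (z - w) = 0 := by rw [map_sub, hzw, sub_self]
  rw [show z - w = ((z-w).1, (z-w).2) from rfl, fderiv_eval, pu_fCLP, pv_fCLP] at h0
  have h0' : ((z-w).1 • ((0:ℝ), (3*q.1^2+q.2^2 : ℝ), (12*q.1^3+4*q.1*q.2^2 : ℝ))
      + (z-w).2 • ((1:ℝ), (2*(q.1*q.2) : ℝ), (4*(q.1^2*q.2) : ℝ))) = (0 : R3) := h0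
  have e1 : (z-w).1 * 0 + (z-w).2 * 1 = 0 := by
    have := congrArg Prod.fst h0'
    simpa [smul_eq_mul] using this
  have e2 : (z-w).1 * (3*q.1^2+q.2^2) + (z-w).2 * (2*(q.1*q.2)) = 0 := by
    have := congrArg (fun r : R3 => r.2.1) h0'
    simpa [smul_eq_mul] using this
  have hz2 : (z-w).2 = 0 := by linarith [e1]
  have hz1 : (z-w).1 = 0 := by
    rw [hz2] at e2
    rcases mul_eq_zero.mp (by linarith [e2] : (z-w).1 * (3*q.1^2+q.2^2) = 0) with h|h
    · exact h
    · exact absurd h h3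
  have : z - w = 0 := Prod.ext hz1 hz2
  exact sub_eq_zero.mp this

end NCL2
namespace NCL3
open NCL

variable {f : R2 → R3} {g1 g2 w1 w2 : ℝ → ℝ}

lemma notInj_of_w1 (hf : IsGTMS f g1 g2 w1 w2) {x : R2} (h : w1 x.1 = 0) :
    ¬ Function.Injective (fderiv ℝ f x) := by
  intro hInj
  have h1 : fderiv ℝ f x ((1:ℝ), (0:ℝ)) = fderiv ℝ f x ((0:ℝ),(0:ℝ)) := by
    rw [fderiv_eval, fderiv_eval, hf.deriv_u x, h]
    simp [Prod.ext_iff]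
  have := hInj h1
  simp [Prod.ext_iff] at this

lemma notInj_of_w2 (hf : IsGTMS f g1 g2 w1 w2) {x : R2} (h : w2 x.2 = 0) :
    ¬ Function.Injective (fderiv ℝ f x) := by
  intro hInj
  have h1 : fderiv ℝ f x ((0:ℝ), (1:ℝ)) = fderiv ℝ f x ((0:ℝ),(0:ℝ)) := by
    rw [fderiv_eval, fderiv_eval, hf.deriv_v x, h]
    simp [Prod.ext_iff]
  have := hInj h1
  simp [Prod.ext_iff] at this

lemma notInj_of_g (hf : IsGTMS f g1 g2 w1 w2) {x : R2} (h : g1 x.1 * g2 x.2 = 1) :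
    ¬ Function.Injective (fderiv ℝ f x) := by
  by_cases hw1 : w1 x.1 = 0
  · exact notInj_of_w1 hf hw1
  intro hInj
  have hg1 : g1 x.1 ≠ 0 := by
    intro h0; rw [h0, zero_mul] at h; exact zero_ne_one h
  have h1 : fderiv ℝ f x (w2 x.2 / (2 * (g1 x.1)^2), w1 x.1 / 2) = fderiv ℝ f x ((0:ℝ),(0:ℝ)) := by
    rw [fderiv_eval, fderiv_eval, hf.deriv_u x, hf.deriv_v x]
    have hg2 : g2 x.2 = (g1 x.1)⁻¹ := eq_inv_of_mul_eq_one_right h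
    rw [hg2]
    simp only [Prod.ext_iff, Prod.smul_mk, smul_eq_mul, Prod.mk_add_mk, Prod.fst_add, Prod.snd_add]
    refine ⟨?_, ?_, ?_⟩ <;> · field_simp; ring
  have := hInj h1
  simp [Prod.ext_iff] at this
  exact hw1 (this.2)

lemma inj_of_reg (hf : IsGTMS f g1 g2 w1 w2) {x : R2} (h1 : w1 x.1 ≠ 0) (h2 : w2 x.2 ≠ 0)
    (h3 : g1 x.1 * g2 x.2 ≠ 1) : Function.Injective (fderiv ℝ f x) := by
  intro z w hzw
  set A := g1 x.1 with hA
  set B := g2 x.2 with hB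
  set W1 := w1 x.1 with hW1
  set W2 := w2 x.2 with hW2
  have h0 : fderiv ℝ f x (z - w) = 0 := by rw [map_sub, hzw, sub_self]
  rw [show z - w = ((z-w).1, (z-w).2) from rfl, fderiv_eval, hf.deriv_u x, hf.deriv_v x] at h0
  set s := (z-w).1 with hs
  set t := (z-w).2 with ht
  have e1 : s * ((-1 - A^2) * W1 / 2) + t * ((1 + B^2) * W2 / 2) = 0 := by
    have := congrArg Prod.fst h0
    simpa [smul_eq_mul] using this
  have e2 : s * ((1 - A^2) * W1 / 2) + t * ((1 - B^2) * W2 / 2) = 0 := by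
    have := congrArg (fun r : R3 => r.2.1) h0
    simpa [smul_eq_mul] using this
  have e3 : s * (A * W1) + t * (-(B * W2)) = 0 := by
    have := congrArg (fun r : R3 => r.2.2) h0
    simpa [smul_eq_mul] using this
  have k1 : t * W2 = A^2 * (s * W1) := by linear_combination e1 + e2
  have k2 : s * W1 = B^2 * (t * W2) := by linear_combination e2 - e1
  have k3 : A * (s * W1) = B * (t * W2) := by linear_combination e3
  have hS : s * W1 = 0 := by
    by_contra hS
    have k5 : (s * W1) * (A * (1 - A * B)) = 0 := by linear_combination k3 + B * k1
    rcases mul_eq_zero.mp k5 with h | h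
    · exact hS h
    rcases mul_eq_zero.mp h with h | h
    · exact hS (by linear_combination k2 + B^2 * k1 + (B^2 * A * (s*W1)) * h)
    · exact h3 (by linarith)
  have hs0 : s = 0 := (mul_eq_zero.mp hS).resolve_right h1
  have ht0 : t = 0 := by
    have htw : t * W2 = 0 := by rw [hS] at k1; simpa using k1
    exact (mul_eq_zero.mp htw).resolve_right h2
  have : z - w = 0 := Prod.ext hs0 ht0
  exact sub_eq_zero.mp this

end NCL3
namespace NCL4
open NCL Filter Set

lemma abs_le_of_uIcc {a s z : ℝ} (h : z ∈ Set.uIcc a s) : |z - a| ≤ |s - a| := by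
  rcases Set.mem_uIcc.mp h with ⟨h1, h2⟩ | ⟨h1, h2⟩ <;>
    (apply abs_le.mpr; constructor <;> nlinarith [le_abs_self (s-a), neg_abs_le (s-a)])

lemma deriv2_cont {g : ℝ → ℝ} (hg : ContDiff ℝ (⊤ : ℕ∞) g) : Continuous (deriv (deriv g)) := by
  have hgg : ContDiff ℝ ((⊤:ℕ∞):WithTop ℕ∞) g := hg.of_le (by simp)
  have h2 := ContDiff.iterate_deriv 2 hgg
  have he : deriv^[2] g = deriv (deriv g) := by
    rw [Function.iterate_succ_apply', Function.iterate_one]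
  rw [he] at h2
  exact h2.continuous

lemma deriv_diff {g : ℝ → ℝ} (hg : ContDiff ℝ (⊤ : ℕ∞) g) : Differentiable ℝ (deriv g) := by
  have hgg : ContDiff ℝ ((⊤:ℕ∞):WithTop ℕ∞) g := hg.of_le (by simp)
  have h2 := ContDiff.iterate_deriv 1 hgg
  rw [Function.iterate_one] at h2
  exact h2.differentiable (by simp)

/-- second order bound from vanishing first derivative -/
lemma sq_bound {g : ℝ → ℝ} (hg : ContDiff ℝ (⊤ : ℕ∞) g) {a : ℝ} (h1 : deriv g a = 0) :
    ∃ K, 0 ≤ K ∧ ∀ s : ℝ, |s - a| ≤ 1 → |g s - g a| ≤ K * (s - a)^2 := by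
  obtain ⟨M, hM⟩ := (isCompact_Icc (a := a-1) (b := a+1)).exists_bound_of_continuousOn
    (deriv2_cont hg).continuousOn
  set K := max M 0 with hK
  have hK0 : 0 ≤ K := le_max_right _ _
  refine ⟨K, hK0, fun s hs => ?_⟩
  have hIccsub : Set.uIcc a s ⊆ Set.Icc (a-1) (a+1) := by
    intro z hz
    have := abs_le_of_uIcc hz
    have h2 := abs_le.mp (le_trans this hs)
    exact ⟨by linarith [h2.1], by linarith [h2.2]⟩
  have step1 : ∀ z ∈ Set.uIcc a s, |deriv g z| ≤ K * |s - a| := by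
    intro z hz
    have hsub2 : Set.uIcc a z ⊆ Set.uIcc a s := Set.uIcc_subset_uIcc Set.left_mem_uIcc hz
    have hd0 := Convex.norm_image_sub_le_of_norm_deriv_le (f := deriv g)
      (s := Set.uIcc a z) (C := K)
      (fun y _ => (deriv_diff hg) y)
      (fun y hy => le_trans (hM y (hIccsub (hsub2 hy))) (le_max_left M 0))
      (convex_uIcc a z) (Set.left_mem_uIcc) (Set.right_mem_uIcc)
    have hd : |deriv g z - deriv g a| ≤ K * |z - a| := by
      simpa [Real.norm_eq_abs] using hd0
    rw [h1, sub_zero] at hd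
    calc |deriv g z| ≤ K * |z - a| := hd
      _ ≤ K * |s - a| := by
          exact mul_le_mul_of_nonneg_left (abs_le_of_uIcc hz) hK0
  have step2 : |g s - g a| ≤ (K * |s - a|) * |s - a| := by
    have := Convex.norm_image_sub_le_of_norm_deriv_le (f := g)
      (s := Set.uIcc a s)
      (fun y _ => (hg.differentiable (by simp)) y)
      step1 (convex_uIcc a s) (Set.left_mem_uIcc) (Set.right_mem_uIcc)
    simpa [Real.norm_eq_abs] using this
  calc |g s - g a| ≤ (K * |s - a|) * |s - a| := step2
    _ = K * (s - a)^2 := by rw [mul_assoc, abs_mul_abs_self]; ring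

end NCL4
namespace NCL5
open NCL Filter Set

/-- second-order Taylor bound at 0 for a map smooth near 0 -/
lemma taylor2 {F : R3 → R3} {V : Set R3} (hV : IsOpen V) (h0 : (0:R3) ∈ V)
    (hF : ContDiffOn ℝ (⊤ : ℕ∞) F V) :
    ∃ K r : ℝ, 0 < r ∧ 0 ≤ K ∧ ∀ y : R3, ‖y‖ ≤ r →
      ‖F y - F 0 - fderiv ℝ F 0 y‖ ≤ K * ‖y‖^2 := by
  have hAt : ContDiffAt ℝ (⊤ : ℕ∞) F 0 := hF.contDiffAt (hV.mem_nhds h0)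
  have hd : ContDiffAt ℝ 1 (fderiv ℝ F) 0 := hAt.fderiv_right (WithTop.coe_le_coe.mpr le_top)
  obtain ⟨K, t, ht, hlip⟩ := hd.exists_lipschitzOnWith
  obtain ⟨r0, hr0, hball⟩ := Metric.mem_nhds_iff.mp (Filter.inter_mem ht (hV.mem_nhds h0))
  refine ⟨K, r0/2, by positivity, K.2, fun y hy => ?_⟩
  have h0t : (0:R3) ∈ t := (hball (Metric.mem_ball_self hr0)).1
  have hsub : Metric.closedBall (0:R3) ‖y‖ ⊆ Metric.ball (0:R3) r0 := by
    intro z hz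
    rw [Metric.mem_closedBall] at hz
    rw [Metric.mem_ball]
    calc dist z 0 ≤ ‖y‖ := hz
      _ ≤ r0/2 := hy
      _ < r0 := by linarith
  have key := Convex.norm_image_sub_le_of_norm_hasFDerivWithin_le'
    (f := F) (f' := fun z => fderiv ℝ F z) (φ := fderiv ℝ F 0)
    (s := Metric.closedBall (0:R3) ‖y‖) (C := (K:ℝ) * ‖y‖)
    (fun z hz => by
      have hzV : z ∈ V := (hball (hsub hz)).2
      exact ((hF.contDiffAt (hV.mem_nhds hzV)).differentiableAt (by simp)).hasFDerivAt.hasFDerivWithinAt)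
    (fun z hz => by
      have hzt : z ∈ t := (hball (hsub hz)).1
      have := hlip.dist_le_mul z hzt 0 h0t
      rw [dist_eq_norm, dist_eq_norm, sub_zero] at this
      calc ‖fderiv ℝ F z - fderiv ℝ F 0‖ ≤ K * ‖z‖ := this
        _ ≤ K * ‖y‖ := by
            apply mul_le_mul_of_nonneg_left _ K.2
            simpa [Metric.mem_closedBall, dist_eq_norm] using hz)
    (convex_closedBall _ _)
    (Metric.mem_closedBall_self (norm_nonneg y))
    (show y ∈ Metric.closedBall (0:R3) ‖y‖ from by simp [Metric.mem_closedBall, dist_eq_norm])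
  rw [sub_zero] at key
  calc ‖F y - F 0 - fderiv ℝ F 0 y‖ ≤ (K:ℝ) * ‖y‖ * ‖y‖ := key
    _ = K * ‖y‖^2 := by ring

lemma lim_deriv_zero {q : ℝ → ℝ} {α C : ℝ} (h : HasDerivAt q α 0) (h0 : q 0 = 0)
    (hb : ∀ᶠ v in nhdsWithin (0:ℝ) {0}ᶜ, |q v| ≤ C * |v|^2) : α = 0 := by
  have h1 := hasDerivAt_iff_tendsto_slope.mp h
  have h2 : Tendsto (slope q 0) (nhdsWithin (0:ℝ) {0}ᶜ) (nhds 0) := by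
    apply squeeze_zero_norm' (a := fun v => C * |v|)
    · filter_upwards [hb, self_mem_nhdsWithin] with v hv hv0
      have hvne : v ≠ 0 := hv0
      rw [slope_def_field, h0, sub_zero, sub_zero, Real.norm_eq_abs, abs_div]
      rw [div_le_iff₀ (abs_pos.mpr hvne)]
      calc |q v| ≤ C * |v|^2 := hv
        _ = C * |v| * |v| := by ring
    · have : Tendsto (fun v : ℝ => C * |v|) (nhds 0) (nhds (C * |0|)) :=
        (continuous_const.mul continuous_abs).tendsto 0
      simpa using this.mono_left nhdsWithin_le_nhds
  exact tendsto_nhds_unique h1 h2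

lemma lim_affine_zero {b c C : ℝ} (h : ∀ᶠ u in nhdsWithin (0:ℝ) {0}ᶜ, |b + c*u| ≤ C*u^2) :
    b = 0 := by
  have h1 : Tendsto (fun u : ℝ => b + c*u) (nhdsWithin (0:ℝ) {0}ᶜ) (nhds b) := by
    have : Tendsto (fun u : ℝ => b + c*u) (nhds 0) (nhds (b + c*0)) :=
      (continuous_const.add (continuous_const.mul continuous_id)).tendsto 0
    simpa using this.mono_left nhdsWithin_le_nhds
  have h2 : Tendsto (fun u : ℝ => b + c*u) (nhdsWithin (0:ℝ) {0}ᶜ) (nhds 0) := by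
    apply squeeze_zero_norm' (a := fun u => C * u^2)
    · filter_upwards [h] with u hu
      simpa [Real.norm_eq_abs] using hu
    · have : Tendsto (fun u : ℝ => C * u^2) (nhds 0) (nhds (C * 0^2)) :=
        (continuous_const.mul (continuous_pow 2)).tendsto 0
      simpa using this.mono_left nhdsWithin_le_nhds
  exact tendsto_nhds_unique h1 h2

lemma const_zero_of_bound {c : ℝ} {C : ℝ} (h : ∀ᶠ u in nhdsWithin (0:ℝ) (Set.Ioi 0), |c| ≤ C*u) :
    c = 0 := by
  have h1 : Tendsto (fun u : ℝ => C * u) (nhdsWithin (0:ℝ) (Set.Ioi 0)) (nhds 0) := by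
    have : Tendsto (fun u : ℝ => C * u) (nhds 0) (nhds (C * 0)) :=
      (continuous_const.mul continuous_id).tendsto 0
    simpa using this.mono_left nhdsWithin_le_nhds
  have h2 : |c| ≤ 0 := ge_of_tendsto h1 h
  have := abs_nonneg c
  have : |c| = 0 := le_antisymm h2 this
  exact abs_eq_zero.mp this

/-- derivative of scalar function ip3 ξ (F · - K) along a curve -/
lemma hasDerivAt_ip3_comp {F : ℝ → R3} {V : R3} {x : ℝ} (h : HasDerivAt F V x) (ξ K : R3) :
    HasDerivAt (fun s => ip3 ξ (F s - K)) (ip3 ξ V) x := by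
  have h1 : HasDerivAt (fun s => (F s).1)
      (V.1) x :=
    (ContinuousLinearMap.fst ℝ ℝ (ℝ×ℝ)).hasFDerivAt.comp_hasDerivAt x h
  have h2' : HasDerivAt (fun s => (F s).2) (V.2) x :=
    (ContinuousLinearMap.snd ℝ ℝ (ℝ×ℝ)).hasFDerivAt.comp_hasDerivAt x h
  have h2 : HasDerivAt (fun s => (F s).2.1) (V.2.1) x :=
    (ContinuousLinearMap.fst ℝ ℝ ℝ).hasFDerivAt.comp_hasDerivAt x h2'
  have h3 : HasDerivAt (fun s => (F s).2.2) (V.2.2) x :=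
    (ContinuousLinearMap.snd ℝ ℝ ℝ).hasFDerivAt.comp_hasDerivAt x h2'
  have htot := (((h1.const_mul ξ.1).add (h2.const_mul ξ.2.1)).add (h3.const_mul ξ.2.2)).sub_const
    (ip3 ξ K)
  have hfn : (fun s => ξ.1 * (F s).1 + ξ.2.1 * (F s).2.1 + ξ.2.2 * (F s).2.2 - ip3 ξ K)
      = (fun s => ip3 ξ (F s - K)) := by
    funext s
    simp [ip3]
    ring
  rw [← hfn]
  have hval : ξ.1 * V.1 + ξ.2.1 * V.2.1 + ξ.2.2 * V.2.2 = ip3 ξ V := by simp [ip3]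
  rw [hval] at htot
  exact htot

end NCL5
namespace NCL6
open NCL NCL4 NCL5 Filter Set

variable {f : R2 → R3} {g1 g2 w1 w2 : ℝ → ℝ}

/-- the distinguished covector -/
def xi (c : ℝ) : R3 := (1 + c^2, 1 - c^2, 2*c)

lemma hasDerivAt_slice_u (hf : IsGTMS f g1 g2 w1 w2) (p : R2) (c : ℝ) (v u : ℝ) :
    HasDerivAt (fun s => ip3 (xi c) (f (s, v) - f p)) (-(w1 u * (g1 u - c)^2)) u := by
  have hcurve : HasDerivAt (fun s : ℝ => ((s, v) : R2)) ((1:ℝ), (0:ℝ)) u :=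
    (hasDerivAt_id' u).prodMk (hasDerivAt_const u v)
  have hF : HasFDerivAt f (fderiv ℝ f (u, v)) (u, v) :=
    ((hf.smooth_f.differentiable (by simp)) (u, v)).hasFDerivAt
  have hcomp : HasDerivAt (fun s : ℝ => f (s, v)) (pu f (u, v)) u :=
    hF.comp_hasDerivAt u hcurve
  have h := NCL5.hasDerivAt_ip3_comp hcomp (xi c) (f p)
  have hval : ip3 (xi c) (pu f (u, v)) = -(w1 u * (g1 u - c)^2) := by
    rw [hf.deriv_u (u, v)]
    simp [ip3, xi]
    ring
  rw [hval] at h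
  exact h

lemma hasDerivAt_slice_v (hf : IsGTMS f g1 g2 w1 w2) (p : R2) (c : ℝ) (u v : ℝ) :
    HasDerivAt (fun s => ip3 (xi c) (f (u, s) - f p)) (w2 v * (c * g2 v - 1)^2) v := by
  have hcurve : HasDerivAt (fun s : ℝ => ((u, s) : R2)) ((0:ℝ), (1:ℝ)) v :=
    (hasDerivAt_const v u).prodMk (hasDerivAt_id' v)
  have hF : HasFDerivAt f (fderiv ℝ f (u, v)) (u, v) :=
    ((hf.smooth_f.differentiable (by simp)) (u, v)).hasFDerivAt
  have hcomp : HasDerivAt (fun s : ℝ => f (u, s)) (pv f (u, v)) v :=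
    hF.comp_hasDerivAt v hcurve
  have h := NCL5.hasDerivAt_ip3_comp hcomp (xi c) (f p)
  have hval : ip3 (xi c) (pv f (u, v)) = w2 v * (c * g2 v - 1)^2 := by
    rw [hf.deriv_v (u, v)]
    simp [ip3, xi]
    ring
  rw [hval] at h
  exact h

lemma phi_zero (c : ℝ) (f : R2 → R3) (p : R2) : ip3 (xi c) (f p - f p) = 0 := by
  simp [ip3]

/-- The key quintic flatness estimate. -/
lemma phi_bound (hf : IsGTMS f g1 g2 w1 w2) (p : R2)
    (h1 : deriv g1 p.1 = 0) (h2 : deriv g2 p.2 = 0) (hmul : g1 p.1 * g2 p.2 = 1) :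
    ∃ C : ℝ, 0 ≤ C ∧ ∀ x : R2, ‖x - p‖ ≤ 1 →
      |ip3 (xi (g1 p.1)) (f x - f p)| ≤ C * ‖x - p‖^5 := by
  set a := p.1
  set b := p.2
  set c := g1 p.1 with hc
  obtain ⟨K1, hK10, hK1⟩ := NCL4.sq_bound hf.smooth_g1 h1
  have hGsm : ContDiff ℝ (⊤ : ℕ∞) (fun v => c * g2 v) := contDiff_const.mul hf.smooth_g2
  have hGd : deriv (fun v => c * g2 v) b = 0 := by
    rw [deriv_const_mul c ((hf.smooth_g2.differentiable (by simp)) b), h2, mul_zero]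
  obtain ⟨K2, hK20, hK2⟩ := NCL4.sq_bound hGsm hGd
  obtain ⟨M1', hM1⟩ := (isCompact_Icc (a := a-1) (b := a+1)).exists_bound_of_continuousOn
    (hf.smooth_w1.continuous.continuousOn)
  obtain ⟨M2', hM2⟩ := (isCompact_Icc (a := b-1) (b := b+1)).exists_bound_of_continuousOn
    (hf.smooth_w2.continuous.continuousOn)
  set M1 := max M1' 0 with hM1def
  set M2 := max M2' 0 with hM2def
  have hM10 : 0 ≤ M1 := le_max_right _ _
  have hM20 : 0 ≤ M2 := le_max_right _ _
  refine ⟨M1 * K1^2 + M2 * K2^2, by positivity, fun x hx => ?_⟩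
  have hd1 : |x.1 - a| ≤ ‖x - p‖ := by
    have := norm_fst_le (x - p)
    simpa [Real.norm_eq_abs] using this
  have hd2 : |x.2 - b| ≤ ‖x - p‖ := by
    have := norm_snd_le (x - p)
    simpa [Real.norm_eq_abs] using this
  have hxp0 : (0:ℝ) ≤ ‖x - p‖ := norm_nonneg _
  -- u-direction estimate at fixed v = x.2
  have hu : |ip3 (xi c) (f (x.1, x.2) - f p) - ip3 (xi c) (f (a, x.2) - f p)|
      ≤ (M1 * K1^2 * ‖x - p‖^4) * |x.1 - a| := by
    have key := Convex.norm_image_sub_le_of_norm_hasDerivWithin_le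
      (f := fun s => ip3 (xi c) (f (s, x.2) - f p))
      (f' := fun s => -(w1 s * (g1 s - c)^2))
      (s := Set.uIcc a x.1) (C := M1 * K1^2 * ‖x - p‖^4)
      (fun z hz => (hasDerivAt_slice_u hf p c x.2 z).hasDerivWithinAt)
      (fun z hz => by
        have hza : |z - a| ≤ |x.1 - a| := NCL4.abs_le_of_uIcc hz
        have hza1 : |z - a| ≤ 1 := le_trans hza (le_trans hd1 hx)
        have hw : |w1 z| ≤ M1 := by
          have h2' := abs_le.mp hza1
          exact le_trans (hM1 z ⟨by linarith [h2'.1], by linarith [h2'.2]⟩) (le_max_left _ _)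
        have hg : |g1 z - c| ≤ K1 * (z - a)^2 := hK1 z hza1
        have hzx : |z - a| ≤ ‖x - p‖ := le_trans hza hd1
        rw [Real.norm_eq_abs, abs_neg, abs_mul]
        have hsq0 : (z - a)^2 ≤ ‖x - p‖^2 := by
          rw [← sq_abs (z - a)]
          exact pow_le_pow_left₀ (abs_nonneg _) hzx 2
        have e1 : |g1 z - c| ≤ K1 * ‖x - p‖^2 :=
          le_trans hg (mul_le_mul_of_nonneg_left hsq0 hK10)
        have hsq : (g1 z - c)^2 ≤ (K1 * ‖x - p‖^2)^2 := by
          rw [← sq_abs (g1 z - c)]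
          exact pow_le_pow_left₀ (abs_nonneg _) e1 2
        have : |(g1 z - c)^2| = (g1 z - c)^2 := abs_of_nonneg (sq_nonneg _)
        rw [this]
        calc |w1 z| * (g1 z - c)^2 ≤ M1 * ((K1 * ‖x - p‖^2)^2) := by
              apply mul_le_mul hw hsq (sq_nonneg _) hM10
          _ = M1 * K1^2 * ‖x - p‖^4 := by ring)
      (convex_uIcc _ _) Set.left_mem_uIcc Set.right_mem_uIcc
    simpa [Real.norm_eq_abs] using key
  -- v-direction estimate at u = a
  have hv : |ip3 (xi c) (f (a, x.2) - f p) - ip3 (xi c) (f (a, b) - f p)|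
      ≤ (M2 * K2^2 * ‖x - p‖^4) * |x.2 - b| := by
    have key := Convex.norm_image_sub_le_of_norm_hasDerivWithin_le
      (f := fun s => ip3 (xi c) (f (a, s) - f p))
      (f' := fun s => w2 s * (c * g2 s - 1)^2)
      (s := Set.uIcc b x.2) (C := M2 * K2^2 * ‖x - p‖^4)
      (fun z hz => (hasDerivAt_slice_v hf p c a z).hasDerivWithinAt)
      (fun z hz => by
        have hzb : |z - b| ≤ |x.2 - b| := NCL4.abs_le_of_uIcc hz
        have hzb1 : |z - b| ≤ 1 := le_trans hzb (le_trans hd2 hx)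
        have hw : |w2 z| ≤ M2 := by
          have h2' := abs_le.mp hzb1
          exact le_trans (hM2 z ⟨by linarith [h2'.1], by linarith [h2'.2]⟩) (le_max_left _ _)
        have hg : |c * g2 z - 1| ≤ K2 * (z - b)^2 := by
          have := hK2 z hzb1
          rw [show c * g2 b = 1 from hmul] at this
          exact this
        have hzx : |z - b| ≤ ‖x - p‖ := le_trans hzb hd2
        rw [Real.norm_eq_abs, abs_mul]
        have hsq0 : (z - b)^2 ≤ ‖x - p‖^2 := by
          rw [← sq_abs (z - b)]
          exact pow_le_pow_left₀ (abs_nonneg _) hzx 2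
        have e1 : |c * g2 z - 1| ≤ K2 * ‖x - p‖^2 :=
          le_trans hg (mul_le_mul_of_nonneg_left hsq0 hK20)
        have hsq : (c * g2 z - 1)^2 ≤ (K2 * ‖x - p‖^2)^2 := by
          rw [← sq_abs (c * g2 z - 1)]
          exact pow_le_pow_left₀ (abs_nonneg _) e1 2
        have : |(c * g2 z - 1)^2| = (c * g2 z - 1)^2 := abs_of_nonneg (sq_nonneg _)
        rw [this]
        calc |w2 z| * (c * g2 z - 1)^2 ≤ M2 * ((K2 * ‖x - p‖^2)^2) := by
              apply mul_le_mul hw hsq (sq_nonneg _) hM20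
          _ = M2 * K2^2 * ‖x - p‖^4 := by ring)
      (convex_uIcc _ _) Set.left_mem_uIcc Set.right_mem_uIcc
    simpa [Real.norm_eq_abs] using key
  have hzero : ip3 (xi c) (f (a, b) - f p) = 0 := by
    have : ((a, b) : R2) = p := rfl
    rw [this]
    exact phi_zero c f p
  rw [hzero, sub_zero] at hv
  have hx5 : |ip3 (xi c) (f x - f p)| ≤
      (M1 * K1^2 * ‖x - p‖^4) * |x.1 - a| + (M2 * K2^2 * ‖x - p‖^4) * |x.2 - b| := by
    have hxx : x = (x.1, x.2) := rfl
    calc |ip3 (xi c) (f x - f p)|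
        = |(ip3 (xi c) (f (x.1, x.2) - f p) - ip3 (xi c) (f (a, x.2) - f p))
            + ip3 (xi c) (f (a, x.2) - f p)| := by rw [← hxx]; ring_nf
      _ ≤ _ := by
          refine le_trans (abs_add_le _ _) ?_
          exact add_le_add hu hv
  calc |ip3 (xi c) (f x - f p)| ≤
      (M1 * K1^2 * ‖x - p‖^4) * |x.1 - a| + (M2 * K2^2 * ‖x - p‖^4) * |x.2 - b| := hx5
    _ ≤ (M1 * K1^2 * ‖x - p‖^4) * ‖x - p‖ + (M2 * K2^2 * ‖x - p‖^4) * ‖x - p‖ := by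
        apply add_le_add <;> apply mul_le_mul_of_nonneg_left (by assumption) (by positivity)
    _ = (M1 * K1^2 + M2 * K2^2) * ‖x - p‖^5 := by ring

end NCL6
set_option maxHeartbeats 1000000
namespace NCL7
open Filter Set

lemma ivt_points {G1 G2 : ℝ → ℝ} (hG1c : Continuous G1) (hG2c : Continuous G2) {a b : ℝ}
    (hmul : G1 a * G2 b = 1) (hdiff : DifferentiableAt ℝ G1 a) (hd : deriv G1 a ≠ 0)
    {δ : ℝ} (hδ : 0 < δ) :
    ∃ u1 v1 u2 v2 : ℝ, v1 ≠ v2 ∧ |u1 - a| < δ ∧ |v1 - b| < δ ∧ |u2 - a| < δ ∧ |v2 - b| < δ ∧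
      G1 u1 * G2 v1 = 1 ∧ G1 u2 * G2 v2 = 1 := by
  have hG2b : G2 b ≠ 0 := by
    intro h; rw [h, mul_zero] at hmul; exact zero_ne_one hmul
  set F : ℝ → ℝ := fun u => G1 u * G2 b - 1 with hFdef
  have hFa : F a = 0 := by simp [hFdef, hmul]
  set d : ℝ := deriv G1 a * G2 b with hddef
  have hd0 : d ≠ 0 := mul_ne_zero hd hG2b
  have hF : HasDerivAt F d a := (hdiff.hasDerivAt.mul_const (G2 b)).sub_const 1
  have hslope := hasDerivAt_iff_tendsto_slope.mp hF
  have habs : (0:ℝ) < |d|/2 := by positivity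
  have hev : ∀ᶠ u in nhdsWithin a {a}ᶜ, |slope F a u - d| < |d|/2 := by
    have := hslope (Metric.ball_mem_nhds d habs)
    filter_upwards [this] with u hu
    simpa [Metric.mem_ball, Real.dist_eq] using hu
  -- pick u2 on the right, u1 on the left
  have hright : nhdsWithin a (Set.Ioi a) ≤ nhdsWithin a {a}ᶜ :=
    nhdsWithin_mono a (fun x hx => ne_of_gt hx)
  have hleft : nhdsWithin a (Set.Iio a) ≤ nhdsWithin a {a}ᶜ :=
    nhdsWithin_mono a (fun x hx => ne_of_lt hx)
  have hIoo : Set.Ioo a (a + δ) ∈ nhdsWithin a (Set.Ioi a) :=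
    Ioo_mem_nhdsGT_of_mem ⟨le_refl a, by linarith⟩
  have hIoo' : Set.Ioo (a - δ) a ∈ nhdsWithin a (Set.Iio a) :=
    Ioo_mem_nhdsLT_of_mem ⟨by linarith, le_refl a⟩
  obtain ⟨u2, hu2s, hu2m⟩ := ((hev.filter_mono hright).and
    (eventually_of_mem hIoo (fun x hx => hx))).exists
  obtain ⟨u1, hu1s, hu1m⟩ := ((hev.filter_mono hleft).and
    (eventually_of_mem hIoo' (fun x hx => hx))).exists
  have hu1ne : u1 ≠ a := ne_of_lt hu1m.2
  have hu2ne : u2 ≠ a := ne_of_gt hu2m.1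
  have hFval : ∀ u : ℝ, u ≠ a → F u = slope F a u * (u - a) := by
    intro u hu
    rw [slope_def_field, hFa, sub_zero, div_mul_cancel₀ _ (sub_ne_zero.mpr hu)]
  set s1 := slope F a u1 with hs1def
  set s2 := slope F a u2 with hs2def
  have hs1 := abs_sub_lt_iff.mp hu1s
  have hs2 := abs_sub_lt_iff.mp hu2s
  have hss : 0 < s1 * s2 := by
    rcases lt_or_gt_of_ne hd0 with hneg | hpos
    · have : |d| = -d := abs_of_neg hneg
      rw [this] at hs1 hs2
      have : s1 < 0 := by linarith [hs1.1]
      have : s2 < 0 := by linarith [hs2.1]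
      exact mul_pos_of_neg_of_neg (by linarith [hs1.1]) (by linarith [hs2.1])
    · have : |d| = d := abs_of_pos hpos
      rw [this] at hs1 hs2
      exact mul_pos (by linarith [hs1.2]) (by linarith [hs2.2])
  have hopp : F u1 * F u2 < 0 := by
    rw [hFval u1 hu1ne, hFval u2 hu2ne]
    have h1 : u1 - a < 0 := by linarith [hu1m.2]
    have h2 : 0 < u2 - a := by linarith [hu2m.1]
    nlinarith [mul_pos hss (mul_pos (neg_pos.mpr h1) h2)]
  -- continuity in the second variable
  have hFu1 : F u1 ≠ 0 := fun h => by rw [h, zero_mul] at hopp; exact lt_irrefl 0 hopp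
  have hFu2 : F u2 ≠ 0 := fun h => by rw [h, mul_zero] at hopp; exact lt_irrefl 0 hopp
  set ε : ℝ := min |F u1| |F u2| / (|G1 u1| + |G1 u2| + 1) with hεdef
  have hε : 0 < ε := by
    apply div_pos
    · exact lt_min (abs_pos.mpr hFu1) (abs_pos.mpr hFu2)
    · positivity
  obtain ⟨r, hr, hrs⟩ := Metric.continuousAt_iff.mp (hG2c.continuousAt (x := b)) ε hε
  set t : ℝ := min r δ with htdef
  have ht : 0 < t := lt_min hr hδ
  -- the two nearby parameter values
  have key : ∀ v : ℝ, |v - b| < t → ∃ u : ℝ, |u - a| < δ ∧ G1 u * G2 v = 1 := by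
    intro v hv
    have hG2v : |G2 v - G2 b| < ε := by
      have := hrs (show dist v b < r by rw [Real.dist_eq]; exact lt_of_lt_of_le hv (min_le_left _ _))
      rwa [Real.dist_eq] at this
    set H : ℝ → ℝ := fun u => G1 u * G2 v - 1 with hHdef
    have hHF : ∀ u : ℝ, H u - F u = G1 u * (G2 v - G2 b) := by intro u; simp [hHdef, hFdef]; ring
    have hbound : ∀ u : ℝ, |H u - F u| < (|G1 u| + 1) * ε := by
      intro u
      rw [hHF, abs_mul]
      calc |G1 u| * |G2 v - G2 b| ≤ |G1 u| * ε := by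
            exact mul_le_mul_of_nonneg_left (le_of_lt hG2v) (abs_nonneg _)
        _ < (|G1 u| + 1) * ε := by nlinarith [hε]
    have hεsmall1 : (|G1 u1| + 1) * ε ≤ |F u1| := by
      have h1 : (|G1 u1| + 1) ≤ (|G1 u1| + |G1 u2| + 1) := by nlinarith [abs_nonneg (G1 u2)]
      have h2 : (|G1 u1| + |G1 u2| + 1) * ε = min |F u1| |F u2| := by
        rw [hεdef]; field_simp
      nlinarith [min_le_left |F u1| |F u2|, hε, abs_nonneg (G1 u1)]
    have hεsmall2 : (|G1 u2| + 1) * ε ≤ |F u2| := by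
      have h2 : (|G1 u1| + |G1 u2| + 1) * ε = min |F u1| |F u2| := by
        rw [hεdef]; field_simp
      nlinarith [min_le_right |F u1| |F u2|, hε, abs_nonneg (G1 u2), abs_nonneg (G1 u1)]
    -- H u1 and H u2 have the signs of F u1 and F u2, which are opposite
    have hH1 : H u1 * F u1 > 0 := by
      have hb := hbound u1
      have := abs_sub_lt_iff.mp hb
      rcases abs_cases (F u1) with ⟨he, hsgn⟩ | ⟨he, hsgn⟩
      · nlinarith [hεsmall1, this.1, this.2]
      · nlinarith [hεsmall1, this.1, this.2]
    have hH2 : H u2 * F u2 > 0 := by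
      have hb := hbound u2
      have := abs_sub_lt_iff.mp hb
      rcases abs_cases (F u2) with ⟨he, hsgn⟩ | ⟨he, hsgn⟩
      · nlinarith [hεsmall2, this.1, this.2]
      · nlinarith [hεsmall2, this.1, this.2]
    have hHopp : H u1 * H u2 < 0 := by nlinarith [hH1, hH2, hopp]
    have hHcont : ContinuousOn H (Set.uIcc u1 u2) :=
      ((hG1c.mul continuous_const).sub continuous_const).continuousOn
    have hmem : (0:ℝ) ∈ Set.uIcc (H u1) (H u2) := by
      rcases le_or_gt (H u1) 0 with h | h
      · apply Set.mem_uIcc.mpr; left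
        constructor
        · exact h
        · nlinarith [hHopp]
      · apply Set.mem_uIcc.mpr; right
        constructor
        · nlinarith [hHopp]
        · exact le_of_lt h
    obtain ⟨u, hu, hu0⟩ := intermediate_value_uIcc hHcont hmem
    refine ⟨u, ?_, by have : H u = 0 := hu0; simpa [hHdef, sub_eq_zero] using this⟩
    rcases Set.mem_uIcc.mp hu with ⟨hl, hr'⟩ | ⟨hl, hr'⟩ <;>
    · rw [abs_lt]
      have e1 := abs_lt.mp (show |u1 - a| < δ by
        rw [abs_lt]; exact ⟨by linarith [hu1m.1], by linarith [hu1m.2]⟩)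
      have e2 := abs_lt.mp (show |u2 - a| < δ by
        rw [abs_lt]; exact ⟨by linarith [hu2m.1], by linarith [hu2m.2]⟩)
      exact ⟨by linarith [e1.1, e2.1], by linarith [e1.2, e2.2]⟩
  obtain ⟨ua, hua, huamul⟩ := key (b + t/2) (by rw [abs_of_pos (by linarith)]; ring_nf; linarith)
  obtain ⟨ub, hub, hubmul⟩ := key (b + t/3) (by rw [abs_of_pos (by linarith)]; ring_nf; linarith)
  refine ⟨ua, b + t/2, ub, b + t/3, by intro h; nlinarith [ht], hua, ?_, hub, ?_, huamul, hubmul⟩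
  · rw [abs_of_pos (by linarith : (0:ℝ) < b + t/2 - b)]
    have : t ≤ δ := min_le_right _ _
    linarith
  · rw [abs_of_pos (by linarith : (0:ℝ) < b + t/3 - b)]
    have : t ≤ δ := min_le_right _ _
    linarith

end NCL7
lemma NCLmem_ball_pair {p : R2} {δ u v : ℝ} (h1 : |u - p.1| < δ) (h2 : |v - p.2| < δ) :
    ((u, v) : R2) ∈ Metric.ball p δ := by
  rw [Metric.mem_ball, Prod.dist_eq]
  apply max_lt <;> rw [Real.dist_eq] <;> assumption

set_option maxHeartbeats 1600000 in
/-- there is no cuspidal lips on any generalized timelike minimal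
surface. -/
theorem no_cuspidal_lips
    (f : R2 → R3) (g1 g2 w1 w2 : ℝ → ℝ) (hf : IsGTMS f g1 g2 w1 w2) :
    ∀ p : R2, ¬ AEquiv f p fCLP (0, 0) := by
  intro p hAE
  obtain ⟨Φ, Ψ, hΦd, hΦp, hΨd, hΨp, heq⟩ := hAE
  obtain ⟨U1, V1, Φinv, hU1, hpU1, hV1, hΦpV1, hΦs, hΦis, hΦm, hΦim, hΦli, hΦri⟩ := hΦd
  obtain ⟨U2, V2, Ψinv, hU2, hfpU2, hV2, hΨfpV2, hΨs, hΨis, hΨm, hΨim, hΨli, hΨri⟩ := hΨd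
  have hfdiff : Differentiable ℝ f := hf.smooth_f.differentiable (by simp)
  have hfcont : Continuous f := hf.smooth_f.continuous
  have hfCLP0 : fCLP ((0:ℝ),(0:ℝ)) = ((0:ℝ),(0:ℝ),(0:ℝ)) := by norm_num [fCLP]
  -- the basic open neighbourhood where everything holds
  obtain ⟨O0, hO0sub, hO0open, hpO0⟩ := mem_nhds_iff.mp heq
  set O : Set R2 := (O0 ∩ (U1 ∩ Φ ⁻¹' V1)) ∩ f ⁻¹' U2 with hOdef
  have hOopen : IsOpen O :=
    (hO0open.inter (hΦs.continuousOn.isOpen_inter_preimage hU1 hV1)).inter (hU2.preimage hfcont)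
  have hpO : p ∈ O := ⟨⟨hpO0, hpU1, hΦpV1⟩, hfpU2⟩
  -- differentiability helpers
  have hΨdiffAt : ∀ y ∈ U2, DifferentiableAt ℝ Ψ y := fun y hy =>
    (hΨs.contDiffAt (hU2.mem_nhds hy)).differentiableAt (by simp)
  have hΨinvdiffAt : ∀ y ∈ V2, DifferentiableAt ℝ Ψinv y := fun y hy =>
    (hΨis.contDiffAt (hV2.mem_nhds hy)).differentiableAt (by simp)
  have hΦdiffAt : ∀ x ∈ U1, DifferentiableAt ℝ Φ x := fun x hx =>
    (hΦs.contDiffAt (hU1.mem_nhds hx)).differentiableAt (by simp)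
  have hΦinvdiffAt : ∀ y ∈ V1, DifferentiableAt ℝ Φinv y := fun y hy =>
    (hΦis.contDiffAt (hV1.mem_nhds hy)).differentiableAt (by simp)
  -- injectivity of the differentials of the diffeomorphisms
  have hDΨinj : ∀ y ∈ U2, Function.Injective (fderiv ℝ Ψ y) := fun y hy =>
    NCL.inj_of_leftinv (A := Ψinv) (B := Ψ)
      (Filter.eventually_of_mem (hU2.mem_nhds hy) (fun z hz => hΨli z hz))
      (hΨdiffAt y hy) (hΨinvdiffAt _ (hΨm hy))
  have hDΦinj : ∀ x ∈ U1, Function.Injective (fderiv ℝ Φ x) := fun x hx =>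
    NCL.inj_of_leftinv (A := Φinv) (B := Φ)
      (Filter.eventually_of_mem (hU1.mem_nhds hx) (fun z hz => hΦli z hz))
      (hΦdiffAt x hx) (hΦinvdiffAt _ (hΦm hx))
  -- chain rule on O
  have hchain : ∀ x ∈ O, ∀ z : R2,
      fderiv ℝ Ψ (f x) (fderiv ℝ f x z) = fderiv ℝ fCLP (Φ x) (fderiv ℝ Φ x z) := by
    intro x hx z
    have hxU1 : x ∈ U1 := hx.1.2.1
    have hfxU2 : f x ∈ U2 := hx.2
    have hEe : (fun w => Ψ (f w)) =ᶠ[nhds x] (fun w => fCLP (Φ w)) :=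
      Filter.eventually_of_mem (hOopen.mem_nhds hx) (fun w hw => hO0sub hw.1.1)
    have hder : fderiv ℝ (fun w => Ψ (f w)) x = fderiv ℝ (fun w => fCLP (Φ w)) x :=
      hEe.fderiv_eq
    have hL : fderiv ℝ (fun w => Ψ (f w)) x = (fderiv ℝ Ψ (f x)).comp (fderiv ℝ f x) :=
      fderiv_comp x (hΨdiffAt _ hfxU2) (hfdiff x)
    have hR : fderiv ℝ (fun w => fCLP (Φ w)) x = (fderiv ℝ fCLP (Φ x)).comp (fderiv ℝ Φ x) :=
      fderiv_comp x (NCL2.fCLP_diffAt _) (hΦdiffAt x hxU1)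
    have := congrArg (fun (T : R2 →L[ℝ] R3) => T z) (hL.symm.trans (hder.trans hR))
    simpa using this
  -- singular points of f in O are mapped to the origin by Φ
  have hsing : ∀ x ∈ O, ¬ Function.Injective (fderiv ℝ f x) → Φ x = ((0:ℝ),(0:ℝ)) := by
    intro x hx hnInj
    by_contra hne
    apply hnInj
    intro z w hzw
    have h1 : fderiv ℝ fCLP (Φ x) (fderiv ℝ Φ x z) = fderiv ℝ fCLP (Φ x) (fderiv ℝ Φ x w) := by
      rw [← hchain x hx z, ← hchain x hx w, hzw]
    have h2 : fderiv ℝ Φ x z = fderiv ℝ Φ x w := NCL2.inj_fCLP hne h1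
    exact hDΦinj x hx.1.2.1 h2
  -- injectivity of Φ on O
  have hΦinjO : ∀ x1 ∈ O, ∀ x2 ∈ O, Φ x1 = Φ x2 → x1 = x2 := by
    intro x1 h1 x2 h2 h
    calc x1 = Φinv (Φ x1) := (hΦli x1 h1.1.2.1).symm
      _ = Φinv (Φ x2) := by rw [h]
      _ = x2 := hΦli x2 h2.1.2.1
  obtain ⟨δ, hδ, hball⟩ := Metric.mem_nhds_iff.mp (hOopen.mem_nhds hpO)
  have huniq : ∀ x1 x2 : R2, x1 ∈ Metric.ball p δ → x2 ∈ Metric.ball p δ →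
      ¬Function.Injective (fderiv ℝ f x1) → ¬Function.Injective (fderiv ℝ f x2) → x1 = x2 := by
    intro x1 x2 hb1 hb2 hs1 hs2
    exact hΦinjO x1 (hball hb1) x2 (hball hb2)
      (by rw [hsing x1 (hball hb1) hs1, hsing x2 (hball hb2) hs2])
  by_cases hreg : Function.Injective (fderiv ℝ f p)
  · -- regular case : contradiction with singularity of fCLP at the origin
    have hΦinv0 : Φinv ((0:ℝ),(0:ℝ)) = p := by rw [← hΦp]; exact hΦli p hpU1
    have h0V1 : ((0:ℝ),(0:ℝ)) ∈ V1 := hΦp ▸ hΦpV1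
    have hid : ∀ v, fderiv ℝ Φ (Φinv ((0:ℝ),(0:ℝ))) (fderiv ℝ Φinv ((0:ℝ),(0:ℝ)) v) = v :=
      NCL.leftinv_fderiv (A := Φ) (B := Φinv)
        (Filter.eventually_of_mem (hV1.mem_nhds h0V1) (fun z hz => hΦri z hz))
        (hΦinvdiffAt _ h0V1) (by rw [hΦinv0]; exact hΦdiffAt p hpU1)
    set X := fderiv ℝ Φinv ((0:ℝ),(0:ℝ)) ((1:ℝ),(0:ℝ)) with hXdef
    have hX : fderiv ℝ Φ p X = ((1:ℝ),(0:ℝ)) := by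
      have := hid ((1:ℝ),(0:ℝ))
      rwa [hΦinv0] at this
    have hcombX := hchain p hpO X
    rw [hX, hΦp] at hcombX
    have h0 : fderiv ℝ fCLP ((0:ℝ),(0:ℝ)) ((1:ℝ),(0:ℝ)) = 0 := by
      have h := NCL2.pu_fCLP ((0:ℝ),(0:ℝ))
      rw [pu] at h
      rw [h]
      norm_num [Prod.ext_iff]
    rw [h0] at hcombX
    have hfX : fderiv ℝ f p X = 0 := by
      apply hDΨinj (f p) hfpU2
      rw [hcombX, map_zero]
    have hX0 : X = 0 := by
      apply hreg
      rw [hfX, map_zero]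
    rw [hX0, map_zero] at hX
    simp [Prod.ext_iff] at hX
  · -- p is a singular point
    by_cases hw1 : w1 p.1 = 0
    · have h1 : ¬Function.Injective (fderiv ℝ f (p.1, p.2 + δ/2)) :=
        NCL3.notInj_of_w1 hf (x := (p.1, p.2 + δ/2)) hw1
      have h2 : ¬Function.Injective (fderiv ℝ f (p.1, p.2 - δ/2)) :=
        NCL3.notInj_of_w1 hf (x := (p.1, p.2 - δ/2)) hw1
      have hb1 : ((p.1, p.2 + δ/2) : R2) ∈ Metric.ball p δ :=
        NCLmem_ball_pair (by simpa using hδ)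
          (by rw [show p.2 + δ/2 - p.2 = δ/2 by ring, abs_of_pos (by linarith)]; linarith)
      have hb2 : ((p.1, p.2 - δ/2) : R2) ∈ Metric.ball p δ :=
        NCLmem_ball_pair (by simpa using hδ)
          (by rw [show p.2 - δ/2 - p.2 = -(δ/2) by ring, abs_neg, abs_of_pos (by linarith)]; linarith)
      have huv := huniq _ _ hb1 hb2 h1 h2
      have hss : p.2 + δ/2 = p.2 - δ/2 := congrArg Prod.snd huv
      linarith
    by_cases hw2 : w2 p.2 = 0
    · have h1 : ¬Function.Injective (fderiv ℝ f (p.1 + δ/2, p.2)) :=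
        NCL3.notInj_of_w2 hf (x := (p.1 + δ/2, p.2)) hw2
      have h2 : ¬Function.Injective (fderiv ℝ f (p.1 - δ/2, p.2)) :=
        NCL3.notInj_of_w2 hf (x := (p.1 - δ/2, p.2)) hw2
      have hb1 : ((p.1 + δ/2, p.2) : R2) ∈ Metric.ball p δ :=
        NCLmem_ball_pair
          (by rw [show p.1 + δ/2 - p.1 = δ/2 by ring, abs_of_pos (by linarith)]; linarith)
          (by simpa using hδ)
      have hb2 : ((p.1 - δ/2, p.2) : R2) ∈ Metric.ball p δ :=
        NCLmem_ball_pair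
          (by rw [show p.1 - δ/2 - p.1 = -(δ/2) by ring, abs_neg, abs_of_pos (by linarith)]; linarith)
          (by simpa using hδ)
      have huv := huniq _ _ hb1 hb2 h1 h2
      have hss : p.1 + δ/2 = p.1 - δ/2 := congrArg Prod.fst huv
      linarith
    have hmul : g1 p.1 * g2 p.2 = 1 := by
      by_contra hne
      exact hreg (NCL3.inj_of_reg hf hw1 hw2 hne)
    by_cases hg1' : deriv g1 p.1 = 0
    swap
    · -- deriv g1 p.1 ≠ 0 : two nearby singular points by IVT
      obtain ⟨u1, v1, u2, v2, hvne, hu1, hv1, hu2, hv2, hm1, hm2⟩ :=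
        NCL7.ivt_points hf.smooth_g1.continuous hf.smooth_g2.continuous hmul
          ((hf.smooth_g1.differentiable (by simp)) p.1) hg1' hδ
      have hs1 : ¬Function.Injective (fderiv ℝ f (u1, v1)) :=
        NCL3.notInj_of_g hf (x := (u1, v1)) hm1
      have hs2 : ¬Function.Injective (fderiv ℝ f (u2, v2)) :=
        NCL3.notInj_of_g hf (x := (u2, v2)) hm2
      have hb1 : ((u1, v1) : R2) ∈ Metric.ball p δ := NCLmem_ball_pair hu1 hv1
      have hb2 : ((u2, v2) : R2) ∈ Metric.ball p δ := NCLmem_ball_pair hu2 hv2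
      have := huniq _ _ hb1 hb2 hs1 hs2
      exact hvne (congrArg Prod.snd this)
    by_cases hg2' : deriv g2 p.2 = 0
    swap
    · -- deriv g2 p.2 ≠ 0 : mirrored IVT
      obtain ⟨u1, v1, u2, v2, hvne, hu1, hv1, hu2, hv2, hm1, hm2⟩ :=
        NCL7.ivt_points hf.smooth_g2.continuous hf.smooth_g1.continuous
          (by rw [mul_comm]; exact hmul)
          ((hf.smooth_g2.differentiable (by simp)) p.2) hg2' hδ
      have hs1 : ¬Function.Injective (fderiv ℝ f (v1, u1)) :=
        NCL3.notInj_of_g hf (x := (v1, u1)) (by rw [mul_comm]; exact hm1)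
      have hs2 : ¬Function.Injective (fderiv ℝ f (v2, u2)) :=
        NCL3.notInj_of_g hf (x := (v2, u2)) (by rw [mul_comm]; exact hm2)
      have hb1 : ((v1, u1) : R2) ∈ Metric.ball p δ := NCLmem_ball_pair hv1 hu1
      have hb2 : ((v2, u2) : R2) ∈ Metric.ball p δ := NCLmem_ball_pair hv2 hu2
      have := huniq _ _ hb1 hb2 hs1 hs2
      exact hvne (congrArg Prod.fst this)
    -- THE MAIN CASE: g1 g2 = 1, g1' = 0, g2' = 0 at p
    set c : ℝ := g1 p.1 with hcdef
    set ξ : R3 := NCL6.xi c with hξdef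
    obtain ⟨C, hC0, hCb⟩ := NCL6.phi_bound hf p hg1' hg2' hmul
    have hΦinv0 : Φinv ((0:ℝ),(0:ℝ)) = p := by rw [← hΦp]; exact hΦli p hpU1
    have h0V1 : ((0:ℝ),(0:ℝ)) ∈ V1 := hΦp ▸ hΦpV1
    have hΨinv0 : Ψinv ((0:ℝ),(0:ℝ),(0:ℝ)) = f p := by
      have h := hΨli (f p) hfpU2
      rwa [hΨp, hfCLP0] at h
    have h0V2 : ((0:ℝ),(0:ℝ),(0:ℝ)) ∈ V2 := by rw [← hfCLP0, ← hΨp]; exact hΨfpV2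
    -- the master relation near the origin
    have hrel : ∀ᶠ y in nhds ((0:ℝ),(0:ℝ)), Ψinv (fCLP y) = f (Φinv y) ∧ Φinv y ∈ O := by
      have hcontΦinv : ContinuousAt Φinv ((0:ℝ),(0:ℝ)) :=
        hΦis.continuousOn.continuousAt (hV1.mem_nhds h0V1)
      have hpre : Φinv ⁻¹' O ∈ nhds (((0:ℝ),(0:ℝ)) : R2) :=
        hcontΦinv.preimage_mem_nhds (by rw [hΦinv0]; exact hOopen.mem_nhds hpO)
      filter_upwards [hpre, hV1.mem_nhds h0V1] with y hyO hyV1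
      refine ⟨?_, hyO⟩
      have h1 : Ψ (f (Φinv y)) = fCLP (Φ (Φinv y)) := hO0sub (hyO : Φinv y ∈ O).1.1
      rw [hΦri y hyV1] at h1
      have h2 : Ψinv (Ψ (f (Φinv y))) = f (Φinv y) := hΨli _ (hyO : Φinv y ∈ O).2
      rw [h1] at h2
      exact h2
    set L := fderiv ℝ Ψinv (((0:ℝ),(0:ℝ),(0:ℝ)) : R3) with hLdef
    set α1 := ip3 ξ (L ((1:ℝ),(0:ℝ),(0:ℝ))) with hα1
    set α2 := ip3 ξ (L ((0:ℝ),(1:ℝ),(0:ℝ))) with hα2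
    set α3 := ip3 ξ (L ((0:ℝ),(0:ℝ),(1:ℝ))) with hα3
    -- ################ step 1 : α1 = 0 ################
    have hσd : HasDerivAt (fun v : ℝ => Φinv ((0:ℝ), v))
        (fderiv ℝ Φinv (((0:ℝ),(0:ℝ)) : R2) ((0:ℝ),(1:ℝ))) 0 := by
      have hc : HasDerivAt (fun v : ℝ => (((0:ℝ), v) : R2)) (((0:ℝ),(1:ℝ)) : R2) 0 :=
        (hasDerivAt_const 0 (0:ℝ)).prodMk (hasDerivAt_id' 0)
      exact HasFDerivAt.comp_hasDerivAt (f := fun v : ℝ => (((0:ℝ), v) : R2)) 0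
        (hΦinvdiffAt _ h0V1).hasFDerivAt hc
    obtain ⟨Lσ, hLσ⟩ := Asymptotics.isBigO_iff.mp hσd.hasFDerivAt.isBigO_sub
    have hfCLPv : ∀ v : ℝ, fCLP ((0:ℝ), v) = ((v, 0, 0) : R3) := by
      intro v; norm_num [fCLP, Prod.ext_iff]
    have hcurv1 : HasDerivAt (fun v : ℝ => (((v, 0, 0)) : R3)) (((1:ℝ),(0:ℝ),(0:ℝ)) : R3) 0 :=
      (hasDerivAt_id' 0).prodMk ((hasDerivAt_const 0 (0:ℝ)).prodMk (hasDerivAt_const 0 (0:ℝ)))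
    have hqd : HasDerivAt (fun v : ℝ => ip3 ξ (Ψinv (v, 0, 0) - f p)) α1 0 := by
      have hcomp := HasFDerivAt.comp_hasDerivAt (f := fun v : ℝ => ((v, (0:ℝ), (0:ℝ)) : R3)) 0
        (hΨinvdiffAt _ h0V2).hasFDerivAt hcurv1
      exact NCL5.hasDerivAt_ip3_comp hcomp ξ (f p)
    have hq0 : ip3 ξ (Ψinv ((0:ℝ), (0:ℝ), (0:ℝ)) - f p) = 0 := by
      rw [hΨinv0, sub_self]
      simp [ip3]
    have hσ0 : Φinv ((0:ℝ), (0:ℝ)) = p := hΦinv0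
    set Cσ : ℝ := C * (|Lσ| + 1)^5 with hCσ
    have hqb : ∀ᶠ v in nhdsWithin (0:ℝ) {0}ᶜ,
        |ip3 ξ (Ψinv (v, 0, 0) - f p)| ≤ Cσ * |v|^2 := by
      have hcv : Filter.Tendsto (fun v : ℝ => (((0:ℝ), v) : R2)) (nhds 0) (nhds ((0:ℝ),(0:ℝ))) := by
        have := (continuous_const.prodMk continuous_id (f := fun v : ℝ => (0:ℝ))).tendsto (0:ℝ)
        simpa using this
      have hsmall : ∀ᶠ v in nhds (0:ℝ), |v| < min 1 (1/(|Lσ|+1)) := by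
        have hpos : (0:ℝ) < min 1 (1/(|Lσ|+1)) := by positivity
        filter_upwards [Metric.ball_mem_nhds (0:ℝ) hpos] with v hv
        simpa [Real.dist_eq] using hv
      have hcomb := (hcv.eventually hrel).and (hLσ.and hsmall)
      refine (hcomb.filter_mono nhdsWithin_le_nhds).mono ?_
      rintro v ⟨⟨hrel1, hrel2⟩, hLv, hvsmall⟩
      have hLv' : ‖Φinv ((0:ℝ), v) - p‖ ≤ |Lσ| * |v| := by
        have := hLv
        rw [hσ0] at this
        calc ‖Φinv ((0:ℝ), v) - p‖ ≤ Lσ * ‖v - 0‖ := this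
          _ ≤ |Lσ| * |v| := by
              rw [sub_zero, Real.norm_eq_abs]
              exact mul_le_mul_of_nonneg_right (le_abs_self Lσ) (abs_nonneg v)
      have hnorm1 : ‖Φinv ((0:ℝ), v) - p‖ ≤ (|Lσ|+1) * |v| := by
        nlinarith [abs_nonneg v]
      have hn1 : ‖Φinv ((0:ℝ), v) - p‖ ≤ 1 := by
        have h1 : (|Lσ|+1) * |v| ≤ (|Lσ|+1) * (1/(|Lσ|+1)) := by
          apply mul_le_mul_of_nonneg_left _ (by positivity)
          exact le_of_lt (lt_of_lt_of_le hvsmall (min_le_right _ _))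
        have h2 : (|Lσ|+1) * (1/(|Lσ|+1)) = 1 := by field_simp
        linarith
      have hq : ip3 ξ (Ψinv (v, 0, 0) - f p) = ip3 ξ (f (Φinv ((0:ℝ), v)) - f p) := by
        rw [← hrel1, hfCLPv v]
      rw [hq]
      calc |ip3 ξ (f (Φinv ((0:ℝ), v)) - f p)| ≤ C * ‖Φinv ((0:ℝ), v) - p‖^5 :=
            hCb _ hn1
        _ ≤ C * ((|Lσ|+1) * |v|)^5 := by
            apply mul_le_mul_of_nonneg_left _ hC0
            exact pow_le_pow_left₀ (norm_nonneg _) hnorm1 5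
        _ = Cσ * |v|^5 := by rw [hCσ]; ring
        _ ≤ Cσ * |v|^2 := by
            have hv1 : |v| ≤ 1 := le_of_lt (lt_of_lt_of_le hvsmall (min_le_left _ _))
            have hCσ0 : 0 ≤ Cσ := by rw [hCσ]; positivity
            have habs : (0:ℝ) ≤ |v| := abs_nonneg v
            nlinarith [pow_le_pow_of_le_one habs hv1 (show 2 ≤ 5 by norm_num)]
    have hα1_0 : α1 = 0 := NCL5.lim_deriv_zero hqd hq0 hqb
    -- ################ step 2 : α2 = 0 and α3 = 0 ################
    obtain ⟨Kt, rt, hrt, hKt0, hTay⟩ := NCL5.taylor2 hV2 h0V2 hΨis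
    have hτd : HasDerivAt (fun u : ℝ => Φinv (u, (0:ℝ)))
        (fderiv ℝ Φinv (((0:ℝ),(0:ℝ)) : R2) ((1:ℝ),(0:ℝ))) 0 := by
      have hc : HasDerivAt (fun u : ℝ => ((u, (0:ℝ)) : R2)) (((1:ℝ),(0:ℝ)) : R2) 0 :=
        (hasDerivAt_id' 0).prodMk (hasDerivAt_const 0 (0:ℝ))
      exact HasFDerivAt.comp_hasDerivAt (f := fun u : ℝ => ((u, (0:ℝ)) : R2)) 0
        (hΦinvdiffAt _ h0V1).hasFDerivAt hc
    obtain ⟨Lτ, hLτ⟩ := Asymptotics.isBigO_iff.mp hτd.hasFDerivAt.isBigO_sub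
    have hfCLPu : ∀ u : ℝ, fCLP (u, (0:ℝ)) = (((0:ℝ), u^3, 3*u^4) : R3) := by
      intro u; norm_num [fCLP, Prod.ext_iff]
    set Mξ : ℝ := |ξ.1| + |ξ.2.1| + |ξ.2.2| with hMξ
    have hMξ0 : 0 ≤ Mξ := by positivity
    have hLlin : ∀ u : ℝ, ip3 ξ (L (((0:ℝ), u^3, 3*u^4) : R3)) = α2 * u^3 + 3 * α3 * u^4 := by
      intro u
      have hdecomp : ((((0:ℝ), u^3, 3*u^4)) : R3)
          = u^3 • (((0:ℝ),(1:ℝ),(0:ℝ)) : R3) + (3*u^4) • (((0:ℝ),(0:ℝ),(1:ℝ)) : R3) := by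
        simp [Prod.ext_iff]
      rw [hdecomp, map_add, map_smul, map_smul, NCL.ip3_add, NCL.ip3_smul, NCL.ip3_smul]
      ring
    have hynorm : ∀ u : ℝ, |u| ≤ 1 → ‖((((0:ℝ), u^3, 3*u^4)) : R3)‖ ≤ 3 * |u|^3 := by
      intro u hu
      rw [Prod.norm_def, Prod.norm_def]
      simp only [Real.norm_eq_abs, norm_zero]
      have h1 : |u^3| = |u|^3 := abs_pow u 3
      have h2 : |3*u^4| ≤ 3*|u|^3 := by
        rw [abs_mul, abs_pow]
        have : |u|^4 ≤ |u|^3 := pow_le_pow_of_le_one (abs_nonneg u) hu (by norm_num)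
        rw [abs_of_nonneg (by norm_num : (0:ℝ) ≤ 3)]
        nlinarith
      apply max_le (by positivity)
      apply max_le
      · rw [h1]; nlinarith [pow_nonneg (abs_nonneg u) 3]
      · exact h2
    set Cτ : ℝ := C * (|Lτ| + 1)^5 + 9 * Mξ * Kt with hCτ
    have hmain : ∀ᶠ u in nhdsWithin (0:ℝ) {0}ᶜ, |α2 + 3*α3*u| ≤ Cτ * u^2 := by
      have hcu : Filter.Tendsto (fun u : ℝ => ((u, (0:ℝ)) : R2)) (nhds 0) (nhds ((0:ℝ),(0:ℝ))) := by
        have := (continuous_id.prodMk continuous_const (g := fun u : ℝ => (0:ℝ))).tendsto (0:ℝ)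
        simpa using this
      have hsmall : ∀ᶠ u in nhds (0:ℝ), |u| < min (min 1 (1/(|Lτ|+1))) (rt/3) := by
        have hpos : (0:ℝ) < min (min 1 (1/(|Lτ|+1))) (rt/3) := by positivity
        filter_upwards [Metric.ball_mem_nhds (0:ℝ) hpos] with u hu
        simpa [Real.dist_eq] using hu
      have hcomb := (hcu.eventually hrel).and (hLτ.and hsmall)
      refine ((hcomb.filter_mono nhdsWithin_le_nhds).and self_mem_nhdsWithin).mono ?_
      rintro u ⟨⟨⟨hrel1, hrel2⟩, hLu, husmall⟩, hune⟩
      have hune' : u ≠ 0 := hune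
      have hu1 : |u| ≤ 1 := le_of_lt (lt_of_lt_of_le husmall (le_trans (min_le_left _ _) (min_le_left _ _)))
      have huL : |u| ≤ 1/(|Lτ|+1) := le_of_lt (lt_of_lt_of_le husmall (le_trans (min_le_left _ _) (min_le_right _ _)))
      have hurt : |u| ≤ rt/3 := le_of_lt (lt_of_lt_of_le husmall (min_le_right _ _))
      -- the curve point and its image
      have hLu' : ‖Φinv (u, (0:ℝ)) - p‖ ≤ (|Lτ|+1) * |u| := by
        have h := hLu
        rw [hΦinv0] at h
        calc ‖Φinv (u, (0:ℝ)) - p‖ ≤ Lτ * ‖u - 0‖ := h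
          _ ≤ (|Lτ|+1) * |u| := by
              rw [sub_zero, Real.norm_eq_abs]
              nlinarith [le_abs_self Lτ, abs_nonneg u, abs_nonneg Lτ]
      have hn1 : ‖Φinv (u, (0:ℝ)) - p‖ ≤ 1 := by
        have h1 : (|Lτ|+1) * |u| ≤ (|Lτ|+1) * (1/(|Lτ|+1)) :=
          mul_le_mul_of_nonneg_left huL (by positivity)
        have h2 : (|Lτ|+1) * (1/(|Lτ|+1)) = 1 := by field_simp
        linarith
      -- the relation
      have hq : ip3 ξ (Ψinv (((0:ℝ), u^3, 3*u^4) : R3) - f p)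
          = ip3 ξ (f (Φinv (u, (0:ℝ))) - f p) := by
        rw [← hrel1, hfCLPu u]
      -- φ bound
      have hφ : |ip3 ξ (Ψinv (((0:ℝ), u^3, 3*u^4) : R3) - f p)| ≤ C * (|Lτ|+1)^5 * |u|^5 := by
        rw [hq]
        calc |ip3 ξ (f (Φinv (u, (0:ℝ))) - f p)| ≤ C * ‖Φinv (u, (0:ℝ)) - p‖^5 := hCb _ hn1
          _ ≤ C * ((|Lτ|+1) * |u|)^5 := by
              apply mul_le_mul_of_nonneg_left _ hC0
              exact pow_le_pow_left₀ (norm_nonneg _) hLu' 5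
          _ = C * (|Lτ|+1)^5 * |u|^5 := by ring
      -- Taylor bound
      have hyn : ‖((((0:ℝ), u^3, 3*u^4)) : R3)‖ ≤ 3 * |u|^3 := hynorm u hu1
      have hyrt : ‖((((0:ℝ), u^3, 3*u^4)) : R3)‖ ≤ rt := by
        have h3 : 3 * |u|^3 ≤ 3 * |u| := by
          have := pow_le_pow_of_le_one (abs_nonneg u) hu1 (show 1 ≤ 3 by norm_num)
          nlinarith [this]
        have : 3 * |u| ≤ rt := by nlinarith [hurt]
        linarith
      have hT := hTay _ hyrt
      have hTξ : |ip3 ξ (Ψinv (((0:ℝ), u^3, 3*u^4) : R3) - f p)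
          - (α2 * u^3 + 3 * α3 * u^4)| ≤ 9 * Mξ * Kt * |u|^5 := by
        have heq1 : ip3 ξ (Ψinv (((0:ℝ), u^3, 3*u^4) : R3) - f p)
            - (α2 * u^3 + 3 * α3 * u^4)
            = ip3 ξ (Ψinv (((0:ℝ), u^3, 3*u^4) : R3) - Ψinv ((0:ℝ),(0:ℝ),(0:ℝ))
              - L (((0:ℝ), u^3, 3*u^4) : R3)) := by
          rw [NCL.ip3_sub ξ (Ψinv (((0:ℝ), u^3, 3*u^4) : R3) - Ψinv ((0:ℝ),(0:ℝ),(0:ℝ)))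
              (L (((0:ℝ), u^3, 3*u^4) : R3)),
            NCL.ip3_sub ξ (Ψinv (((0:ℝ), u^3, 3*u^4) : R3)) (Ψinv ((0:ℝ),(0:ℝ),(0:ℝ))),
            NCL.ip3_sub ξ (Ψinv (((0:ℝ), u^3, 3*u^4) : R3)) (f p), hΨinv0, hLlin u]
          try ring
        rw [heq1]
        calc |ip3 ξ _| ≤ Mξ * ‖Ψinv (((0:ℝ), u^3, 3*u^4) : R3) - Ψinv ((0:ℝ),(0:ℝ),(0:ℝ))
              - L (((0:ℝ), u^3, 3*u^4) : R3)‖ := NCL.ip3_bound ξ _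
          _ ≤ Mξ * (Kt * ‖((((0:ℝ), u^3, 3*u^4)) : R3)‖^2) := by
              apply mul_le_mul_of_nonneg_left _ hMξ0
              exact hT
          _ ≤ Mξ * (Kt * (3*|u|^3)^2) := by
              apply mul_le_mul_of_nonneg_left _ hMξ0
              apply mul_le_mul_of_nonneg_left _ hKt0
              exact pow_le_pow_left₀ (norm_nonneg _) hyn 2
          _ = 9 * Mξ * Kt * (|u|^5 * |u|) := by ring
          _ ≤ 9 * Mξ * Kt * |u|^5 := by
              have h5 : (0:ℝ) ≤ |u|^5 := by positivity
              have h9 : (0:ℝ) ≤ 9 * Mξ * Kt := by positivity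
              nlinarith [mul_nonneg (mul_nonneg h9 h5) (sub_nonneg.mpr hu1)]
      -- combine
      have hcomb2 : |α2 * u^3 + 3 * α3 * u^4| ≤ Cτ * |u|^5 := by
        have h1 : |α2 * u^3 + 3 * α3 * u^4|
            ≤ |ip3 ξ (Ψinv (((0:ℝ), u^3, 3*u^4) : R3) - f p)|
              + |ip3 ξ (Ψinv (((0:ℝ), u^3, 3*u^4) : R3) - f p) - (α2 * u^3 + 3 * α3 * u^4)| := by
          have h := abs_add_le (ip3 ξ (Ψinv (((0:ℝ), u^3, 3*u^4) : R3) - f p))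
            ((α2 * u^3 + 3 * α3 * u^4) - ip3 ξ (Ψinv (((0:ℝ), u^3, 3*u^4) : R3) - f p))
          rw [show ip3 ξ (Ψinv (((0:ℝ), u^3, 3*u^4) : R3) - f p)
              + ((α2 * u^3 + 3 * α3 * u^4)
                - ip3 ξ (Ψinv (((0:ℝ), u^3, 3*u^4) : R3) - f p)) = α2 * u^3 + 3 * α3 * u^4
            by ring] at h
          rwa [abs_sub_comm ((α2 * u^3 + 3 * α3 * u^4))
            (ip3 ξ (Ψinv (((0:ℝ), u^3, 3*u^4) : R3) - f p))] at h
        calc |α2 * u^3 + 3 * α3 * u^4|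
            ≤ |ip3 ξ (Ψinv (((0:ℝ), u^3, 3*u^4) : R3) - f p)|
              + |ip3 ξ (Ψinv (((0:ℝ), u^3, 3*u^4) : R3) - f p) - (α2 * u^3 + 3 * α3 * u^4)| := h1
          _ ≤ C * (|Lτ|+1)^5 * |u|^5 + 9 * Mξ * Kt * |u|^5 := add_le_add hφ hTξ
          _ = Cτ * |u|^5 := by rw [hCτ]; ring
      -- divide by |u|^3
      have hu3 : (0:ℝ) < |u|^3 := by positivity
      have hfactor : |α2 + 3*α3*u| * |u|^3 = |α2 * u^3 + 3 * α3 * u^4| := by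
        rw [← abs_pow, ← abs_mul]
        congr 1
        ring
      have h5eq : Cτ * |u|^5 = (Cτ * u^2) * |u|^3 := by
        rw [show |u|^5 = |u|^2 * |u|^3 by ring, sq_abs]
        ring
      have := hcomb2
      rw [← hfactor, h5eq] at this
      exact le_of_mul_le_mul_right this hu3
    have hα2_0 : α2 = 0 := NCL5.lim_affine_zero hmain
    have hα3_0 : α3 = 0 := by
      have h3 : (3:ℝ) * α3 = 0 := by
        apply NCL5.const_zero_of_bound (C := Cτ)
        have hsub : nhdsWithin (0:ℝ) (Set.Ioi 0) ≤ nhdsWithin (0:ℝ) {0}ᶜ :=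
          nhdsWithin_mono 0 (fun x hx => ne_of_gt hx)
        filter_upwards [hmain.filter_mono hsub, self_mem_nhdsWithin] with u hu hupos
        have hup : (0:ℝ) < u := hupos
        rw [hα2_0] at hu
        have : |3*α3*u| ≤ Cτ * u^2 := by simpa using hu
        rw [abs_mul, abs_of_pos hup] at this
        have := le_of_mul_le_mul_right (by linarith [this] : |3*α3| * u ≤ (Cτ * u) * u) hup
        simpa using this
      linarith
    -- ################ final contradiction ################
    have hidΨ : ∀ v, fderiv ℝ Ψinv (Ψ (f p)) (fderiv ℝ Ψ (f p) v) = v :=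
      NCL.leftinv_fderiv (A := Ψinv) (B := Ψ)
        (Filter.eventually_of_mem (hU2.mem_nhds hfpU2) (fun z hz => hΨli z hz))
        (hΨdiffAt _ hfpU2) (hΨinvdiffAt _ (hΨm hfpU2))
    have hξfix : L (fderiv ℝ Ψ (f p) ξ) = ξ := by
      have h := hidΨ ξ
      rw [hΨp, hfCLP0] at h
      exact h
    set z : R3 := fderiv ℝ Ψ (f p) ξ with hzdef
    have hzdec : z = z.1 • (((1:ℝ),(0:ℝ),(0:ℝ)) : R3) + z.2.1 • (((0:ℝ),(1:ℝ),(0:ℝ)) : R3)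
        + z.2.2 • (((0:ℝ),(0:ℝ),(1:ℝ)) : R3) := by
      simp [Prod.ext_iff]
    have hzero : ip3 ξ ξ = 0 := by
      nth_rewrite 2 [← hξfix]
      rw [hzdec, map_add, map_add, map_smul, map_smul, map_smul,
        NCL.ip3_add, NCL.ip3_add, NCL.ip3_smul, NCL.ip3_smul, NCL.ip3_smul]
      rw [← hα1, ← hα2, ← hα3, hα1_0, hα2_0, hα3_0]
      ring
    have hpos : 0 < ip3 ξ ξ := by
      rw [hξdef]
      show 0 < ip3 (NCL6.xi c) (NCL6.xi c)
      simp only [NCL6.xi, ip3]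
      nlinarith [sq_nonneg c, sq_nonneg (1 - c^2), sq_nonneg (1 + c^2)]
    rw [hzero] at hpos
    exact lt_irrefl 0 hpos
end
end

section
/- Let f be a generalized timelike minimal surface with real Weierstrass data (g1, g2, ω1 du, ω2 dv) and let p be a singular point with df_p = 0 (equivalently ω1(p) = ω2(p) = 0). Then f is a front at p if and only if g1(p)g2(p) ≠ 1 and (g1)_u(p)·(g2)_v(p) ≠ 0. -/
noncomputable section

open Real Filter

lemma gtms_det_indep (x1 x2 x3 y1 y2 y3 m1 m2 m3 v1 v2 : ℝ)
    (e1 : v1 * x1 + v2 * y1 = 0) (e2 : v1 * x2 + v2 * y2 = 0) (e3 : v1 * x3 + v2 * y3 = 0)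
    (hd : x1 * (y2 * m3 - y3 * m2) - y1 * (x2 * m3 - x3 * m2) + m1 * (x2 * y3 - x3 * y2) ≠ 0) :
    v1 = 0 ∧ v2 = 0 := by
  constructor
  · have h : v1 * (x1 * (y2 * m3 - y3 * m2) - y1 * (x2 * m3 - x3 * m2) + m1 * (x2 * y3 - x3 * y2)) = 0 := by
      linear_combination (y2 * m3 - y3 * m2) * e1 + (m1 * y3 - y1 * m3) * e2 + (y1 * m2 - m1 * y2) * e3
    exact (mul_eq_zero.1 h).resolve_right hd
  · have h : v2 * (x1 * (y2 * m3 - y3 * m2) - y1 * (x2 * m3 - x3 * m2) + m1 * (x2 * y3 - x3 * y2)) = 0 := by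
      linear_combination (-(x2 * m3 - x3 * m2)) * e1 + (x1 * m3 - m1 * x3) * e2 + (m1 * x2 - x1 * m2) * e3
    exact (mul_eq_zero.1 h).resolve_right hd

set_option maxHeartbeats 1000000 in
lemma gtms_normal_deriv (g1 g2 : ℝ → ℝ) (h1 : ContDiff ℝ (⊤ : ℕ∞) g1) (h2 : ContDiff ℝ (⊤ : ℕ∞) g2)
    (p : R2) :
    DifferentiableAt ℝ (gtmsNormal g1 g2) p ∧
    (fderiv ℝ (gtmsNormal g1 g2) p) ((1:ℝ), (0:ℝ)) =
      ((deriv g1 p.1 * ((-(2*(g1 p.1 + g2 p.2) - g2 p.2*(1 - g1 p.1 * g2 p.2)) /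
          Real.sqrt ((1 - g1 p.1 * g2 p.2) ^ 2 + 2 * (g1 p.1 + g2 p.2) ^ 2) ^ 3) * (g1 p.1 + g2 p.2)
          + 1 / Real.sqrt ((1 - g1 p.1 * g2 p.2) ^ 2 + 2 * (g1 p.1 + g2 p.2) ^ 2)),
        deriv g1 p.1 * ((-(2*(g1 p.1 + g2 p.2) - g2 p.2*(1 - g1 p.1 * g2 p.2)) /
          Real.sqrt ((1 - g1 p.1 * g2 p.2) ^ 2 + 2 * (g1 p.1 + g2 p.2) ^ 2) ^ 3) * (g2 p.2 - g1 p.1)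
          - 1 / Real.sqrt ((1 - g1 p.1 * g2 p.2) ^ 2 + 2 * (g1 p.1 + g2 p.2) ^ 2)),
        deriv g1 p.1 * ((-(2*(g1 p.1 + g2 p.2) - g2 p.2*(1 - g1 p.1 * g2 p.2)) /
          Real.sqrt ((1 - g1 p.1 * g2 p.2) ^ 2 + 2 * (g1 p.1 + g2 p.2) ^ 2) ^ 3) * (1 + g1 p.1 * g2 p.2)
          + g2 p.2 / Real.sqrt ((1 - g1 p.1 * g2 p.2) ^ 2 + 2 * (g1 p.1 + g2 p.2) ^ 2))) : R3) ∧
    (fderiv ℝ (gtmsNormal g1 g2) p) ((0:ℝ), (1:ℝ)) =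
      ((deriv g2 p.2 * ((-(2*(g1 p.1 + g2 p.2) - g1 p.1*(1 - g1 p.1 * g2 p.2)) /
          Real.sqrt ((1 - g1 p.1 * g2 p.2) ^ 2 + 2 * (g1 p.1 + g2 p.2) ^ 2) ^ 3) * (g1 p.1 + g2 p.2)
          + 1 / Real.sqrt ((1 - g1 p.1 * g2 p.2) ^ 2 + 2 * (g1 p.1 + g2 p.2) ^ 2)),
        deriv g2 p.2 * ((-(2*(g1 p.1 + g2 p.2) - g1 p.1*(1 - g1 p.1 * g2 p.2)) /
          Real.sqrt ((1 - g1 p.1 * g2 p.2) ^ 2 + 2 * (g1 p.1 + g2 p.2) ^ 2) ^ 3) * (g2 p.2 - g1 p.1)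
          + 1 / Real.sqrt ((1 - g1 p.1 * g2 p.2) ^ 2 + 2 * (g1 p.1 + g2 p.2) ^ 2)),
        deriv g2 p.2 * ((-(2*(g1 p.1 + g2 p.2) - g1 p.1*(1 - g1 p.1 * g2 p.2)) /
          Real.sqrt ((1 - g1 p.1 * g2 p.2) ^ 2 + 2 * (g1 p.1 + g2 p.2) ^ 2) ^ 3) * (1 + g1 p.1 * g2 p.2)
          + g1 p.1 / Real.sqrt ((1 - g1 p.1 * g2 p.2) ^ 2 + 2 * (g1 p.1 + g2 p.2) ^ 2))) : R3) := by
  have hd1 : HasDerivAt g1 (deriv g1 p.1) p.1 := (h1.differentiable (by simp) p.1).hasDerivAt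
  have hd2 : HasDerivAt g2 (deriv g2 p.2) p.2 := (h2.differentiable (by simp) p.2).hasDerivAt
  have hG1 : HasFDerivAt (fun q : R2 => g1 q.1)
      (deriv g1 p.1 • ContinuousLinearMap.fst ℝ ℝ ℝ) p := hd1.comp_hasFDerivAt p hasFDerivAt_fst
  have hG2 : HasFDerivAt (fun q : R2 => g2 q.2)
      (deriv g2 p.2 • ContinuousLinearMap.snd ℝ ℝ ℝ) p := hd2.comp_hasFDerivAt p hasFDerivAt_snd
  have hDpos : (0:ℝ) < (1 - g1 p.1 * g2 p.2) ^ 2 + 2 * (g1 p.1 + g2 p.2) ^ 2 := by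
    nlinarith [sq_nonneg (1 + g1 p.1 * g2 p.2), sq_nonneg (g1 p.1 + g2 p.2),
      sq_nonneg (g1 p.1 - g2 p.2), sq_nonneg (g1 p.1), sq_nonneg (g2 p.2)]
  have hhne : Real.sqrt ((1 - g1 p.1 * g2 p.2) ^ 2 + 2 * (g1 p.1 + g2 p.2) ^ 2) ≠ 0 :=
    ne_of_gt (Real.sqrt_pos.2 hDpos)
  have hbase1 : HasFDerivAt (fun q : R2 => 1 - g1 q.1 * g2 q.2) _ p :=
    (hasFDerivAt_const (1:ℝ) p).sub (hG1.mul hG2)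
  have hD : HasFDerivAt (fun q : R2 => (1 - g1 q.1 * g2 q.2) ^ 2 + 2 * (g1 q.1 + g2 q.2) ^ 2) _ p :=
    ((hasDerivAt_pow 2 _).comp_hasFDerivAt p hbase1).add
      ((hasFDerivAt_const (2:ℝ) p).mul ((hasDerivAt_pow 2 _).comp_hasFDerivAt p (hG1.add hG2)))
  have hs := (Real.hasDerivAt_sqrt (ne_of_gt hDpos)).inv hhne
  have hS : HasFDerivAt
      (fun q : R2 => (Real.sqrt ((1 - g1 q.1 * g2 q.2) ^ 2 + 2 * (g1 q.1 + g2 q.2) ^ 2))⁻¹) _ p :=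
    hs.comp_hasFDerivAt (h₂ := fun x : ℝ => (Real.sqrt x)⁻¹) p hD
  have hm : HasFDerivAt (fun q : R2 =>
      ((g1 q.1 + g2 q.2, -g1 q.1 + g2 q.2, 1 + g1 q.1 * g2 q.2) : R3)) _ p :=
    HasFDerivAt.prodMk (hG1.add hG2) (HasFDerivAt.prodMk (hG1.neg.add hG2) ((hasFDerivAt_const (1:ℝ) p).add (hG1.mul hG2)))
  have hn : HasFDerivAt (gtmsNormal g1 g2) _ p := hS.smul hm
  refine ⟨hn.differentiableAt, ?_, ?_⟩ <;>
  · rw [hn.fderiv]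
    simp only [ContinuousLinearMap.add_apply, ContinuousLinearMap.smul_apply,
      ContinuousLinearMap.prod_apply, ContinuousLinearMap.smulRight_apply,
      ContinuousLinearMap.coe_fst', ContinuousLinearMap.coe_snd',
      ContinuousLinearMap.neg_apply, ContinuousLinearMap.zero_apply,
      ContinuousLinearMap.sub_apply, Prod.smul_mk, Prod.mk_add_mk, Prod.mk.injEq,
      smul_eq_mul, Prod.ext_iff]
    generalize hgen : Real.sqrt ((1 - g1 p.1 * g2 p.2) ^ 2 + 2 * (g1 p.1 + g2 p.2) ^ 2) = s at hhne ⊢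
    refine ⟨?_, ?_, ?_⟩ <;> (field_simp; ring)


set_option maxHeartbeats 1000000 in
/-- front condition at a rank-zero singular point. -/
theorem front_condition_at_rank_zero_point
    (f : R2 → R3) (g1 g2 w1 w2 : ℝ → ℝ) (hf : IsGTMS f g1 g2 w1 w2)
    (p : R2) (hdf : fderiv ℝ f p = 0) :
    IsFrontAt f g1 g2 p ↔
      (g1 p.1 * g2 p.2 ≠ 1 ∧ deriv g1 p.1 * deriv g2 p.2 ≠ 0) := by
  obtain ⟨hdiff, hnu, hnv⟩ := gtms_normal_deriv g1 g2 hf.smooth_g1 hf.smooth_g2 p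
  have hDpos : (0:ℝ) < (1 - g1 p.1 * g2 p.2) ^ 2 + 2 * (g1 p.1 + g2 p.2) ^ 2 := by
    nlinarith [sq_nonneg (1 + g1 p.1 * g2 p.2), sq_nonneg (g1 p.1 + g2 p.2),
      sq_nonneg (g1 p.1 - g2 p.2), sq_nonneg (g1 p.1), sq_nonneg (g2 p.2)]
  have hhne : Real.sqrt ((1 - g1 p.1 * g2 p.2) ^ 2 + 2 * (g1 p.1 + g2 p.2) ^ 2) ≠ 0 :=
    ne_of_gt (Real.sqrt_pos.2 hDpos)
  have hh2 : Real.sqrt ((1 - g1 p.1 * g2 p.2) ^ 2 + 2 * (g1 p.1 + g2 p.2) ^ 2) ^ 2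
      = (1 - g1 p.1 * g2 p.2) ^ 2 + 2 * (g1 p.1 + g2 p.2) ^ 2 := Real.sq_sqrt hDpos.le
  have hF : HasFDerivAt f (0 : R2 →L[ℝ] R3) p := by
    have := (hf.smooth_f.differentiable (by simp) p).hasFDerivAt
    rwa [hdf] at this
  have hn' : HasFDerivAt (gtmsNormal g1 g2) (fderiv ℝ (gtmsNormal g1 g2) p) p :=
    hdiff.hasFDerivAt
  have hpair : HasFDerivAt (fun q : R2 => (f q, gtmsNormal g1 g2 q))
      ((0 : R2 →L[ℝ] R3).prod (fderiv ℝ (gtmsNormal g1 g2) p)) p := hF.prodMk hn'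
  have hvec : ∀ v : R2, v = v.1 • ((1:ℝ), (0:ℝ)) + v.2 • ((0:ℝ), (1:ℝ)) := by
    intro v; ext <;> simp
  have hNsum : ∀ v : R2, fderiv ℝ (gtmsNormal g1 g2) p v
      = v.1 • (fderiv ℝ (gtmsNormal g1 g2) p (1, 0)) + v.2 • (fderiv ℝ (gtmsNormal g1 g2) p (0, 1)) := by
    intro v
    conv_lhs => rw [hvec v]
    rw [map_add, map_smul, map_smul]
  have key : IsFrontAt f g1 g2 p ↔
      ∀ v : R2, v.1 • (fderiv ℝ (gtmsNormal g1 g2) p (1, 0))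
        + v.2 • (fderiv ℝ (gtmsNormal g1 g2) p (0, 1)) = 0 → v = 0 := by
    unfold IsFrontAt
    rw [hpair.fderiv]
    constructor
    · intro hinj v hv
      have hNv : ((0 : R2 →L[ℝ] R3).prod (fderiv ℝ (gtmsNormal g1 g2) p)) v
          = ((0 : R2 →L[ℝ] R3).prod (fderiv ℝ (gtmsNormal g1 g2) p)) 0 := by
        simp only [ContinuousLinearMap.prod_apply, ContinuousLinearMap.zero_apply, map_zero]
        rw [hNsum v, hv]
        rfl
      exact hinj hNv
    · intro hker x y hxy
      have h2 : fderiv ℝ (gtmsNormal g1 g2) p x = fderiv ℝ (gtmsNormal g1 g2) p y := by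
        simpa [ContinuousLinearMap.prod_apply] using congrArg Prod.snd hxy
      have h3 : (x - y).1 • (fderiv ℝ (gtmsNormal g1 g2) p (1, 0))
          + (x - y).2 • (fderiv ℝ (gtmsNormal g1 g2) p (0, 1)) = 0 := by
        rw [← hNsum (x - y), map_sub, h2, sub_self]
      exact sub_eq_zero.1 (hker _ h3)
  rw [key, hnu, hnv]
  set A := g1 p.1 with hA
  set B := g2 p.2 with hB
  set al := deriv g1 p.1 with hal'
  set be := deriv g2 p.2 with hbe'
  set h := Real.sqrt ((1 - A * B) ^ 2 + 2 * (A + B) ^ 2) with hh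
  constructor
  · intro hker
    have hal : al ≠ 0 := by
      intro h0
      have h1 := hker (1, 0) (by simp [h0])
      simp [Prod.ext_iff] at h1
    have hbe : be ≠ 0 := by
      intro h0
      have h1 := hker (0, 1) (by simp [h0])
      simp [Prod.ext_iff] at h1
    refine ⟨?_, mul_ne_zero hal hbe⟩
    intro hab1
    have E1 : A * B - 1 = 0 := by rw [hab1]; ring
    have E2 : h ^ 2 - 2 * (A + B) ^ 2 = 0 := by rw [hh2, hab1]; ring
    have h1 : ((A ^ 2 * be, al) : R2) = 0 := hker ((A ^ 2 * be, al) : R2) (by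
      simp only [Prod.smul_mk, Prod.mk_add_mk, smul_eq_mul, Prod.mk_eq_zero]
      refine ⟨?_, ?_, ?_⟩
      · field_simp
        linear_combination (-al*be*A*(A+B)*(A*B+1))*E1 + (al*be*(A^2+1))*E2
      · field_simp
        linear_combination (al*be*(-4*A*(A+B) - A*(A*B+1)*(B-A)))*E1 + (al*be*(1-A^2))*E2
      · field_simp
        linear_combination (al*be*(1+A*B)*(2*(A+B) - A^2*B - A))*E1 + (al*be*A*(A*B+1))*E2)
    have h2 : A ^ 2 * be = 0 ∧ al = 0 := by simpa [Prod.ext_iff] using h1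
    exact hal h2.2
  · rintro ⟨hab, halbe⟩ v hv
    have hal : al ≠ 0 := left_ne_zero_of_mul halbe
    have hbe : be ≠ 0 := right_ne_zero_of_mul halbe
    simp only [Prod.smul_mk, Prod.mk_add_mk, smul_eq_mul, Prod.mk_eq_zero] at hv
    obtain ⟨e1, e2, e3⟩ := hv
    have hdet : (al * ((-(2*(A+B) - B*(1-A*B)) / h^3) * (A+B) + 1/h)) *
          ((be * ((-(2*(A+B) - A*(1-A*B)) / h^3) * (B-A) + 1/h)) * (1 + A*B)
            - (be * ((-(2*(A+B) - A*(1-A*B)) / h^3) * (1+A*B) + A/h)) * (B-A))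
        - (be * ((-(2*(A+B) - A*(1-A*B)) / h^3) * (A+B) + 1/h)) *
          ((al * ((-(2*(A+B) - B*(1-A*B)) / h^3) * (B-A) - 1/h)) * (1 + A*B)
            - (al * ((-(2*(A+B) - B*(1-A*B)) / h^3) * (1+A*B) + B/h)) * (B-A))
        + (A+B) * ((al * ((-(2*(A+B) - B*(1-A*B)) / h^3) * (B-A) - 1/h)) *
            (be * ((-(2*(A+B) - A*(1-A*B)) / h^3) * (1+A*B) + A/h))
          - (al * ((-(2*(A+B) - B*(1-A*B)) / h^3) * (1+A*B) + B/h)) *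
            (be * ((-(2*(A+B) - A*(1-A*B)) / h^3) * (B-A) + 1/h)))
        = 2*al*be*(1-A*B)/h^2 := by
      field_simp
      ring
    have hdne : (2:ℝ)*al*be*(1-A*B)/h^2 ≠ 0 := by
      apply div_ne_zero
      · exact mul_ne_zero (mul_ne_zero (mul_ne_zero two_ne_zero hal) hbe)
          (sub_ne_zero.2 (Ne.symm hab))
      · exact pow_ne_zero _ hhne
    have hres := gtms_det_indep _ _ _ _ _ _ (A+B) (B-A) (1+A*B) v.1 v.2 e1 e2 e3
      (by rw [hdet]; exact hdne)
    exact Prod.ext hres.1 hres.2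
end
end
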